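/- arXiv:2204.11670 — 5 statements merged into one kernel-verified Lean document; each statement's English description precedes it below -/
import Mathlib

section
/- Copycat property: Let P be a round-based register protocol. If a concrete configuration γ_f is reachable from γ_i and the location (q,k) is in the support of γ_f, then for every N ∈ ℕ there exist concrete configurations γ_i' and γ_f' with γ_f' reachable from γ_i', such that |γ_i'| = |γ_i| + N, γ_i' has the same support and the same register values as γ_i, the location multiset of γ_f' equals that of γ_f plus N extra copies of (q,k), and γ_f' has the same register values as γ_f. -/
open scoped Classical

/-- Actions of a round-based register protocol: round increment, read of value `x`
from register `α` of round `k - i`, and write of value `x` to register `α` of the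
current round. -/
inductive Act (dim : ℕ) (D : Type) where
  | incr : Act dim D
  | read (i : ℕ) (α : Fin dim) (x : D) : Act dim D
  | write (α : Fin dim) (x : D) : Act dim D

/-- A round-based register protocol. -/
structure Protocol (Q D : Type) (dim : ℕ) where
  q0 : Q
  d0 : D
  v : ℕ
  T : Set (Q × Act dim D × Q)
  read_le : ∀ q i α x q', (q, Act.read i α x, q') ∈ T → i ≤ v
  write_ne : ∀ q α x q', (q, Act.write α x, q') ∈ T → x ≠ d0

/-- A move: a transition together with the round on which it is performed. -/
abbrev Move (Q D : Type) (dim : ℕ) := (Q × Act dim D × Q) × ℕ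

/-- A concrete configuration: a finitely supported multiset of locations and a
valuation of all registers. -/
structure Conc (Q D : Type) (dim : ℕ) where
  loc : (Q × ℕ) →₀ ℕ
  reg : ℕ → Fin dim → D

variable {Q D : Type} {dim : ℕ}

/-- Value read from register `α` of round `k - i` (registers of negative rounds
hold the initial value). -/
def regVal (P : Protocol Q D dim) (γ : Conc Q D dim) (k i : ℕ) (α : Fin dim) : D :=
  if i ≤ k then γ.reg (k - i) α else P.d0

/-- Updating register `α` of round `k` to value `x`. -/
def updReg (r : ℕ → Fin dim → D) (k : ℕ) (α : Fin dim) (x : D) : ℕ → Fin dim → D :=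
  fun k' α' => if k' = k ∧ α' = α then x else r k' α'

/-- Concrete step relation of a round-based register protocol. -/
inductive ConcStep [DecidableEq Q] (P : Protocol Q D dim) :
    Conc Q D dim → Move Q D dim → Conc Q D dim → Prop where
  | incr {q q' : Q} {k : ℕ} {γ γ' : Conc Q D dim} :
      (q, Act.incr, q') ∈ P.T → 0 < γ.loc (q, k) →
      γ'.loc = γ.loc - Finsupp.single (q, k) 1 + Finsupp.single (q', k + 1) 1 →
      γ'.reg = γ.reg →
      ConcStep P γ ((q, Act.incr, q'), k) γ'
  | read {q q' : Q} {k i : ℕ} {α : Fin dim} {x : D} {γ γ' : Conc Q D dim} :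
      (q, Act.read i α x, q') ∈ P.T → 0 < γ.loc (q, k) →
      regVal P γ k i α = x →
      γ'.loc = γ.loc - Finsupp.single (q, k) 1 + Finsupp.single (q', k) 1 →
      γ'.reg = γ.reg →
      ConcStep P γ ((q, Act.read i α x, q'), k) γ'
  | write {q q' : Q} {k : ℕ} {α : Fin dim} {x : D} {γ γ' : Conc Q D dim} :
      (q, Act.write α x, q') ∈ P.T → 0 < γ.loc (q, k) →
      γ'.loc = γ.loc - Finsupp.single (q, k) 1 + Finsupp.single (q', k) 1 →
      γ'.reg = updReg γ.reg k α x →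
      ConcStep P γ ((q, Act.write α x, q'), k) γ'

/-- Concrete reachability. -/
def ConcReach [DecidableEq Q] (P : Protocol Q D dim) : Conc Q D dim → Conc Q D dim → Prop :=
  Relation.ReflTransGen (fun γ γ' => ∃ m, ConcStep P γ m γ')

/-- Initial concrete configuration with `n` processes. -/
noncomputable def Conc.init [DecidableEq Q] (P : Protocol Q D dim) (n : ℕ) : Conc Q D dim :=
  ⟨Finsupp.single (P.q0, 0) n, fun _ _ => P.d0⟩

/-- Number of processes of a concrete configuration. -/
def Conc.size (γ : Conc Q D dim) : ℕ := γ.loc.sum fun _ n => n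

/-- Support of the location multiset of a concrete configuration. -/
def Conc.supp (γ : Conc Q D dim) : Set (Q × ℕ) := {l | 0 < γ.loc l}

/-- The set of non-blank registers of a concrete configuration. -/
def Conc.nonBlank (P : Protocol Q D dim) (γ : Conc Q D dim) : Set (ℕ × Fin dim) :=
  {r | γ.reg r.1 r.2 ≠ P.d0}

/-- An abstract configuration: a set of locations and a set of written registers. -/
structure Abs (Q : Type) (dim : ℕ) where
  S : Set (Q × ℕ)
  W : Set (ℕ × Fin dim)

/-- Abstract step relation. -/
inductive AbsStep (P : Protocol Q D dim) :
    Abs Q dim → Move Q D dim → Abs Q dim → Prop where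
  | incr {σ : Abs Q dim} {q q' : Q} {k : ℕ} :
      (q, Act.incr, q') ∈ P.T → (q, k) ∈ σ.S →
      AbsStep P σ ((q, Act.incr, q'), k) ⟨σ.S ∪ {(q', k + 1)}, σ.W⟩
  | readBlank {σ : Abs Q dim} {q q' : Q} {k i : ℕ} {α : Fin dim} :
      (q, Act.read i α P.d0, q') ∈ P.T → (q, k) ∈ σ.S →
      (i ≤ k → (k - i, α) ∉ σ.W) →
      AbsStep P σ ((q, Act.read i α P.d0, q'), k) ⟨σ.S ∪ {(q', k)}, σ.W⟩
  | readVal {σ : Abs Q dim} {q q' q1 q2 : Q} {k i : ℕ} {α : Fin dim} {x : D} :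
      x ≠ P.d0 → (q, Act.read i α x, q') ∈ P.T → (q, k) ∈ σ.S →
      i ≤ k → (k - i, α) ∈ σ.W →
      (q1, Act.write α x, q2) ∈ P.T → (q1, k - i) ∈ σ.S → (q2, k - i) ∈ σ.S →
      AbsStep P σ ((q, Act.read i α x, q'), k) ⟨σ.S ∪ {(q', k)}, σ.W⟩
  | write {σ : Abs Q dim} {q q' : Q} {k : ℕ} {α : Fin dim} {x : D} :
      (q, Act.write α x, q') ∈ P.T → (q, k) ∈ σ.S →
      AbsStep P σ ((q, Act.write α x, q'), k) ⟨σ.S ∪ {(q', k)}, σ.W ∪ {(k, α)}⟩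

/-- Abstract reachability. -/
def AbsReach (P : Protocol Q D dim) : Abs Q dim → Abs Q dim → Prop :=
  Relation.ReflTransGen (fun σ σ' => ∃ m, AbsStep P σ m σ')

/-- The initial abstract configuration. -/
def Abs.init (P : Protocol Q D dim) : Abs Q dim := ⟨{(P.q0, 0)}, ∅⟩

/-- Abstract execution along a list of moves. -/
inductive AbsRun (P : Protocol Q D dim) : Abs Q dim → List (Move Q D dim) → Abs Q dim → Prop
  | nil (σ : Abs Q dim) : AbsRun P σ [] σ
  | cons {σ σ' σ'' : Abs Q dim} {m : Move Q D dim} {ms : List (Move Q D dim)} :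
      AbsStep P σ m σ' → AbsRun P σ' ms σ'' → AbsRun P σ (m :: ms) σ''

/-- First-write order of a schedule, given a set of already written registers. -/
noncomputable def fwo (W : Set (ℕ × Fin dim)) : List (Move Q D dim) → List (ℕ × Fin dim)
  | [] => []
  | ((_, Act.write α _, _), k) :: ms =>
      if (k, α) ∈ W then fwo W ms else (k, α) :: fwo (W ∪ {(k, α)}) ms
  | _ :: ms => fwo W ms

/-- Projection of a sequence of registers onto those whose round lies in `[k - v, k]`. -/
def winproj (v k : ℕ) (F : List (ℕ × Fin dim)) : List (ℕ × Fin dim) :=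
  F.filter (fun r => decide (k - v ≤ r.1 ∧ r.1 ≤ k))

/-! Copycat: a process sitting at a location of a reachable configuration can be
shadowed by any number of extra processes. Extra processes are passive and never
disturb a run; whenever the shadowed process moves, its copies repeat the same move one
after the other. This is possible because reads and writes are separate operations:
an increment or a read leaves the registers unchanged, and repeating a write rewrites
the value it has just written. -/

namespace Move

def src (m : Move Q D dim) : Q × ℕ := (m.1.1, m.2)

def tgt : Move Q D dim → Q × ℕ
  | ((_, .incr, q'), k) => (q', k + 1)
  | ((_, _, q'), k) => (q', k)

end Move

theorem updReg_updReg_self (r : ℕ → Fin dim → D) (k : ℕ) (α : Fin dim) (x : D) :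
    updReg (updReg r k α x) k α x = updReg r k α x := by
  funext k' α'
  simp only [updReg]
  split_ifs <;> rfl

theorem Finsupp.add_tsub_single_add_single {ι : Type*} (a c : ι →₀ ℕ) {s : ι} (t : ι)
    (hs : 0 < a s) :
    a + c - single s 1 + single t 1 = a - single s 1 + single t 1 + c := by
  rw [← tsub_add_eq_add_tsub (single_le_iff.2 hs), add_right_comm]

namespace Conc

noncomputable def addLoc (γ : Conc Q D dim) (c : (Q × ℕ) →₀ ℕ) : Conc Q D dim := ⟨γ.loc + c, γ.reg⟩

theorem size_addLoc_single (γ : Conc Q D dim) (l : Q × ℕ) (N : ℕ) :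
    (γ.addLoc (Finsupp.single l N)).size = γ.size + N := by
  simp only [size, addLoc]
  rw [Finsupp.sum_add_index' (fun _ => rfl) (fun _ _ _ => rfl), Finsupp.sum_single_index rfl]

theorem supp_addLoc_single {γ : Conc Q D dim} {l : Q × ℕ} (hl : l ∈ γ.supp) (N : ℕ) :
    (γ.addLoc (Finsupp.single l N)).supp = γ.supp := by
  ext l'
  simp only [supp, addLoc, Set.mem_ofPred_eq, Finsupp.add_apply, Finsupp.single_apply]
  split_ifs with h
  · subst h
    exact iff_of_true (Nat.lt_of_lt_of_le hl (Nat.le_add_right _ _)) hl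
  · rw [add_zero]

end Conc

namespace ConcStep

variable [DecidableEq Q] {P : Protocol Q D dim} {γ γ' : Conc Q D dim} {m : Move Q D dim}

theorem src_pos (h : ConcStep P γ m γ') : 0 < γ.loc m.src := by
  cases h <;> assumption

theorem loc_eq (h : ConcStep P γ m γ') :
    γ'.loc = γ.loc - Finsupp.single m.src 1 + Finsupp.single m.tgt 1 := by
  cases h <;> assumption

theorem mem_supp (h : ConcStep P γ m γ') {l : Q × ℕ} (hl : l ∈ γ'.supp) :
    l ∈ γ.supp ∨ l = m.tgt := by
  by_contra! hne
  have hγ : γ.loc l = 0 := Nat.eq_zero_of_not_pos hne.1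
  have ht : Finsupp.single m.tgt 1 l = 0 := Finsupp.single_eq_of_ne hne.2
  simp only [Conc.supp, Set.mem_ofPred_eq, h.loc_eq, Finsupp.add_apply, Finsupp.tsub_apply,
    hγ, ht] at hl
  omega

theorem addLoc (h : ConcStep P γ m γ') (c : (Q × ℕ) →₀ ℕ) :
    ConcStep P (γ.addLoc c) m (γ'.addLoc c) := by
  have hpos : 0 < (γ.addLoc c).loc m.src :=
    Nat.lt_of_lt_of_le h.src_pos (Nat.le_add_right _ _)
  have hloc : (γ'.addLoc c).loc
      = (γ.addLoc c).loc - Finsupp.single m.src 1 + Finsupp.single m.tgt 1 := by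
    simp only [Conc.addLoc, h.loc_eq,
      Finsupp.add_tsub_single_add_single _ _ _ h.src_pos]
  cases h with
  | incr hT _ _ hreg => exact .incr hT hpos hloc hreg
  | read hT _ hval _ hreg => exact .read hT hpos hval hloc hreg
  | write hT _ _ hreg => exact .write hT hpos hloc hreg

theorem again (h : ConcStep P γ m γ') {δ : Conc Q D dim} (hpos : 0 < δ.loc m.src)
    (hreg : δ.reg = γ'.reg) :
    ConcStep P δ m ⟨δ.loc - Finsupp.single m.src 1 + Finsupp.single m.tgt 1, δ.reg⟩ := by
  cases h with
  | incr hT _ _ _ => exact .incr hT hpos rfl rfl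
  | read hT _ hval _ hreg' =>
    exact .read hT hpos (by rw [← hval]; simp only [regVal, hreg, hreg']) rfl rfl
  | write hT _ _ hreg' => exact .write hT hpos rfl (by rw [hreg, hreg', updReg_updReg_self])

theorem reach_copies (h : ConcStep P γ m γ') (n : ℕ) (c : (Q × ℕ) →₀ ℕ) :
    ConcReach P ⟨c + Finsupp.single m.src n, γ'.reg⟩ ⟨c + Finsupp.single m.tgt n, γ'.reg⟩ := by
  induction n generalizing c with
  | zero => simp only [Finsupp.single_zero]; exact .refl
  | succ n ih =>
    have hpos : 0 < (c + Finsupp.single m.src (n + 1)) m.src := by simp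
    have hfirst := h.again (δ := ⟨_, γ'.reg⟩) hpos rfl
    have hsrc : c + Finsupp.single m.src (n + 1) - Finsupp.single m.src 1
        = c + Finsupp.single m.src n := by
      ext l
      simp only [Finsupp.add_apply, Finsupp.tsub_apply, Finsupp.single_apply]
      split_ifs <;> omega
    rw [hsrc, add_right_comm] at hfirst
    have htgt : c + Finsupp.single m.tgt (n + 1)
        = c + Finsupp.single m.tgt 1 + Finsupp.single m.tgt n := by
      rw [add_assoc, ← Finsupp.single_add, add_comm 1 n]
    exact htgt ▸ .head ⟨m, hfirst⟩ (ih _)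

end ConcStep

theorem ConcReach.copycat [DecidableEq Q] {P : Protocol Q D dim} {γi γf : Conc Q D dim}
    (h : ConcReach P γi γf) {l : Q × ℕ} (hl : l ∈ γf.supp) (N : ℕ) :
    ∃ l₀ ∈ γi.supp, ConcReach P (γi.addLoc (Finsupp.single l₀ N))
      (γf.addLoc (Finsupp.single l N)) := by
  induction h generalizing l with
  | refl => exact ⟨l, hl, .refl⟩
  | tail _ hstep ih =>
    obtain ⟨m, hm⟩ := hstep
    rcases hm.mem_supp hl with hold | rfl
    · obtain ⟨l₀, hl₀, hr⟩ := ih hold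
      exact ⟨l₀, hl₀, hr.tail ⟨m, hm.addLoc _⟩⟩
    · obtain ⟨l₀, hl₀, hr⟩ := ih hm.src_pos
      exact ⟨l₀, hl₀, (hr.tail ⟨m, hm.addLoc _⟩).trans (hm.reach_copies N _)⟩

/-- Copycat property (Lemma 1). -/
theorem copycat_property {Q D : Type} {dim : ℕ} [DecidableEq Q]
    (P : Protocol Q D dim) (q : Q) (k N : ℕ) (γi γf : Conc Q D dim)
    (hreach : ConcReach P γi γf) (hsupp : (q, k) ∈ γf.supp) :
    ∃ γi' γf' : Conc Q D dim,
      ConcReach P γi' γf' ∧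
      γi'.size = γi.size + N ∧
      γi'.supp = γi.supp ∧
      γi'.reg = γi.reg ∧
      γf'.loc = γf.loc + Finsupp.single (q, k) N ∧
      γf'.reg = γf.reg := by
  obtain ⟨l₀, hl₀, hr⟩ := hreach.copycat hsupp N
  exact ⟨_, _, hr, γi.size_addLoc_single l₀ N, Conc.supp_addLoc_single hl₀ N, rfl, rfl, rfl⟩
end

section
/- Soundness and completeness of the abstract semantics: For a round-based register protocol P, an error state q_err ∈ Q, and a round number k ∈ ℕ, the following are equivalent: (1) there exists n ∈ ℕ and a concrete configuration γ reachable from γ_init^n whose location multiset contains (q_err, k); (2) there exists an abstract configuration σ reachable from the initial abstract configuration σ_init = ({(q0,0)}, ∅) whose location set contains (q_err, k). -/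
open scoped Classical

variable {Q D : Type} {dim : ℕ}

/-! ### Auxiliary lemmas -/

section Aux

private lemma move_bound (f : (Q × ℕ) →₀ ℕ) (src dest l : Q × ℕ) (N : ℕ)
    (h : l = dest ∨ 2 * N ≤ f l) :
    N ≤ (f - Finsupp.single src N + Finsupp.single dest N) l := by
  rw [Finsupp.add_apply, Finsupp.tsub_apply, Finsupp.single_apply, Finsupp.single_apply]
  rcases h with h | h
  · subst h; rw [if_pos rfl]; omega
  · split_ifs <;> omega

private lemma supp_move {f : (Q × ℕ) →₀ ℕ} {p p' l : Q × ℕ}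
    (h : 0 < (f - Finsupp.single p (1 : ℕ) + Finsupp.single p' (1 : ℕ)) l) :
    l = p' ∨ 0 < f l := by
  rw [Finsupp.add_apply, Finsupp.tsub_apply, Finsupp.single_apply, Finsupp.single_apply] at h
  by_cases h' : p' = l
  · exact Or.inl h'.symm
  · rw [if_neg h'] at h
    right
    split_ifs at h <;> omega

/-- The simulation invariant for soundness. -/
private def Sim (P : Protocol Q D dim) (γ : Conc Q D dim) (σ : Abs Q dim) : Prop :=
  (∀ l, 0 < γ.loc l → l ∈ σ.S) ∧
  (∀ j α, (j, α) ∈ σ.W ↔ γ.reg j α ≠ P.d0) ∧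
  (∀ j (α : Fin dim), γ.reg j α ≠ P.d0 →
    ∃ q1 q2, (q1, Act.write α (γ.reg j α), q2) ∈ P.T ∧ (q1, j) ∈ σ.S ∧ (q2, j) ∈ σ.S)

private lemma sim_init [DecidableEq Q] (P : Protocol Q D dim) (n : ℕ) :
    Sim P (Conc.init P n) (Abs.init P) := by
  refine ⟨?_, ?_, ?_⟩
  · intro l hl
    have hl' : 0 < (Finsupp.single (P.q0, 0) n : (Q × ℕ) →₀ ℕ) l := hl
    rw [Finsupp.single_apply] at hl'
    by_cases h : (P.q0, 0) = l
    · simp [Abs.init, ← h]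
    · rw [if_neg h] at hl'; omega
  · intro j α
    simp [Abs.init, Conc.init]
  · intro j α h
    exact absurd rfl h

private lemma sim_step [DecidableEq Q] {P : Protocol Q D dim} {γ γ' : Conc Q D dim}
    {m : Move Q D dim} {σ : Abs Q dim} (h : ConcStep P γ m γ') (hs : Sim P γ σ) :
    ∃ σ', AbsStep P σ m σ' ∧ Sim P γ' σ' := by
  obtain ⟨hS, hW, hwit⟩ := hs
  cases h with
  | @incr q q' k _ _ hT hpos hloc hreg =>
    refine ⟨⟨σ.S ∪ {(q', k + 1)}, σ.W⟩, AbsStep.incr hT (hS _ hpos), ?_, ?_, ?_⟩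
    · intro l hl
      rw [hloc] at hl
      rcases supp_move hl with h | h
      · exact Set.mem_union_right _ (by simp [h])
      · exact Set.mem_union_left _ (hS _ h)
    · intro j α; rw [hreg]; exact hW j α
    · intro j α h
      rw [hreg] at h ⊢
      obtain ⟨q1, q2, h1, h2, h3⟩ := hwit j α h
      exact ⟨q1, q2, h1, Set.mem_union_left _ h2, Set.mem_union_left _ h3⟩
  | @read q q' k i α x _ _ hT hpos hval hloc hreg =>
    have hsim' : ∀ σ' : Abs Q dim, σ'.S = σ.S ∪ {(q', k)} → σ'.W = σ.W →
        Sim P γ' σ' := by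
      intro σ' hs hw
      refine ⟨?_, ?_, ?_⟩
      · intro l hl
        rw [hloc] at hl
        rw [hs]
        rcases supp_move hl with h | h
        · exact Set.mem_union_right _ (by simp [h])
        · exact Set.mem_union_left _ (hS _ h)
      · intro j β; rw [hreg, hw]; exact hW j β
      · intro j β h
        rw [hreg] at h ⊢
        obtain ⟨q1, q2, h1, h2, h3⟩ := hwit j β h
        exact ⟨q1, q2, h1, by rw [hs]; exact Set.mem_union_left _ h2,
          by rw [hs]; exact Set.mem_union_left _ h3⟩
    by_cases hx : x = P.d0
    · subst hx
      refine ⟨_, AbsStep.readBlank hT (hS _ hpos) ?_, hsim' _ rfl rfl⟩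
      intro hik hmem
      have hne := (hW _ _).mp hmem
      unfold regVal at hval
      rw [if_pos hik] at hval
      exact hne hval
    · have hik : i ≤ k := by
        by_contra hik
        unfold regVal at hval
        rw [if_neg hik] at hval
        exact hx hval.symm
      have hvv : γ.reg (k - i) α = x := by
        unfold regVal at hval
        rwa [if_pos hik] at hval
      have hne : γ.reg (k - i) α ≠ P.d0 := by rw [hvv]; exact hx
      obtain ⟨q1, q2, h1, h2, h3⟩ := hwit (k - i) α hne
      rw [hvv] at h1
      exact ⟨_, AbsStep.readVal hx hT (hS _ hpos) hik ((hW _ _).mpr hne) h1 h2 h3,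
        hsim' _ rfl rfl⟩
  | @write q q' k α x _ _ hT hpos hloc hreg =>
    refine ⟨⟨σ.S ∪ {(q', k)}, σ.W ∪ {(k, α)}⟩, AbsStep.write hT (hS _ hpos), ?_, ?_, ?_⟩
    · intro l hl
      rw [hloc] at hl
      rcases supp_move hl with h | h
      · exact Set.mem_union_right _ (by simp [h])
      · exact Set.mem_union_left _ (hS _ h)
    · intro j β
      rw [hreg]
      by_cases hjβ : j = k ∧ β = α
      · obtain ⟨rfl, rfl⟩ := hjβ
        have hupd : updReg γ.reg j β x j β = x := by simp [updReg]
        rw [hupd]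
        constructor
        · intro _; exact P.write_ne _ _ _ _ hT
        · intro _; exact Set.mem_union_right _ rfl
      · have hmem : ((j, β) ∈ σ.W ∪ {(k, α)}) ↔ (j, β) ∈ σ.W := by
          constructor
          · intro h
            rcases h with h | h
            · exact h
            · exfalso
              apply hjβ
              have : (j, β) = (k, α) := h
              exact ⟨congrArg Prod.fst this, congrArg Prod.snd this⟩
          · exact Set.mem_union_left _
        rw [hmem]
        simp only [updReg, if_neg hjβ]
        exact hW j β
    · intro j β h
      rw [hreg] at h ⊢
      by_cases hjβ : j = k ∧ β = α
      · obtain ⟨rfl, rfl⟩ := hjβ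
        have hupd : updReg γ.reg j β x j β = x := by simp [updReg]
        rw [hupd]
        exact ⟨q, q', hT, Set.mem_union_left _ (hS _ hpos),
          Set.mem_union_right _ rfl⟩
      · simp only [updReg, if_neg hjβ] at h ⊢
        obtain ⟨q1, q2, h1, h2, h3⟩ := hwit j β h
        exact ⟨q1, q2, h1, Set.mem_union_left _ h2, Set.mem_union_left _ h3⟩

private lemma sim_reach [DecidableEq Q] {P : Protocol Q D dim} {n : ℕ} {γ : Conc Q D dim}
    (h : ConcReach P (Conc.init P n) γ) :
    ∃ σ, AbsReach P (Abs.init P) σ ∧ Sim P γ σ := by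
  induction h with
  | refl => exact ⟨Abs.init P, Relation.ReflTransGen.refl, sim_init P n⟩
  | tail h1 h2 ih =>
    obtain ⟨σ, hr, hsim⟩ := ih
    obtain ⟨m, hm⟩ := h2
    obtain ⟨σ', hstep, hsim'⟩ := sim_step hm hsim
    exact ⟨σ', hr.tail ⟨m, hstep⟩, hsim'⟩

/-- Realizability invariant for completeness. -/
private def Realizable [DecidableEq Q] (P : Protocol Q D dim) (σ : Abs Q dim) : Prop :=
  ∀ N : ℕ, ∃ n, ∃ γ : Conc Q D dim, ConcReach P (Conc.init P n) γ ∧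
    (∀ l ∈ σ.S, N ≤ γ.loc l) ∧ (∀ j α, (j, α) ∉ σ.W → γ.reg j α = P.d0)

private lemma realizable_init [DecidableEq Q] (P : Protocol Q D dim) :
    Realizable P (Abs.init P) := by
  intro N
  refine ⟨N, Conc.init P N, Relation.ReflTransGen.refl, ?_, fun _ _ _ => rfl⟩
  intro l hl
  have : l = (P.q0, 0) := hl
  subst this
  simp [Conc.init]

private lemma iter_step [DecidableEq Q] (P : Protocol Q D dim)
    (src dest : Q × ℕ) (r0 : ℕ → Fin dim → D)
    (ρ : (ℕ → Fin dim → D) → (ℕ → Fin dim → D))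
    (hρ : ρ (ρ r0) = ρ r0)
    (hstep : ∀ γ : Conc Q D dim, (γ.reg = r0 ∨ γ.reg = ρ r0) → 0 < γ.loc src →
      ∃ m, ConcStep P γ m
        ⟨γ.loc - Finsupp.single src (1 : ℕ) + Finsupp.single dest (1 : ℕ), ρ γ.reg⟩) :
    ∀ (j : ℕ) (γ : Conc Q D dim), (γ.reg = r0 ∨ γ.reg = ρ r0) → j ≤ γ.loc src →
      ∃ γ' : Conc Q D dim, ConcReach P γ γ' ∧
        γ'.loc = γ.loc - Finsupp.single src j + Finsupp.single dest j ∧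
        (γ'.reg = r0 ∨ γ'.reg = ρ r0) := by
  intro j
  induction j with
  | zero => intro γ hr _; exact ⟨γ, Relation.ReflTransGen.refl, by simp, hr⟩
  | succ j ih =>
    intro γ hr hj
    obtain ⟨m, hm⟩ := hstep γ hr (by omega)
    set γ1 : Conc Q D dim :=
      ⟨γ.loc - Finsupp.single src 1 + Finsupp.single dest 1, ρ γ.reg⟩ with hγ1
    have hr1 : γ1.reg = r0 ∨ γ1.reg = ρ r0 := by
      rcases hr with h | h
      · right; rw [hγ1]; rw [h]
      · right; rw [hγ1]; show ρ γ.reg = ρ r0; rw [h, hρ]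
    have hj1 : j ≤ γ1.loc src := by
      show j ≤ (γ.loc - Finsupp.single src (1 : ℕ) + Finsupp.single dest (1 : ℕ)) src
      rw [Finsupp.add_apply, Finsupp.tsub_apply, Finsupp.single_apply, Finsupp.single_apply]
      rw [if_pos rfl]
      split_ifs <;> omega
    obtain ⟨γ', hreach, hloc, hreg⟩ := ih γ1 hr1 hj1
    refine ⟨γ', Relation.ReflTransGen.head ⟨m, hm⟩ hreach, ?_, hreg⟩
    rw [hloc]
    show (γ.loc - Finsupp.single src (1 : ℕ) + Finsupp.single dest (1 : ℕ))
        - Finsupp.single src j + Finsupp.single dest j = _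
    ext l
    simp only [Finsupp.add_apply, Finsupp.tsub_apply, Finsupp.single_apply]
    rcases eq_or_ne src l with h1 | h1
    · have hjl : j + 1 ≤ γ.loc l := h1 ▸ hj
      rw [if_pos h1]
      split_ifs <;> omega
    · rw [if_neg h1]
      split_ifs <;> omega

private lemma realizable_step [DecidableEq Q] {P : Protocol Q D dim}
    {σ σ' : Abs Q dim} {m : Move Q D dim} (h : AbsStep P σ m σ')
    (hσ : Realizable P σ) : Realizable P σ' := by
  intro N
  obtain ⟨n, γ, hre, hS, hW⟩ := hσ (2 * N + 1)
  cases h with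
  | @incr q q' k hT hq =>
    obtain ⟨γ', hreach, hloc, hreg⟩ := iter_step P (q, k) (q', k + 1) γ.reg id rfl
      (fun γ0 _ hpos => ⟨_, ConcStep.incr hT hpos rfl rfl⟩) N γ (Or.inl rfl)
      (by have := hS _ hq; omega)
    refine ⟨n, γ', hre.trans hreach, ?_, ?_⟩
    · intro l hl
      rw [hloc]
      apply move_bound
      rcases hl with hl | hl
      · right; have := hS l hl; omega
      · left; exact hl
    · intro j α hjα
      rcases hreg with h | h <;> rw [h] <;> exact hW j α hjα
  | @readBlank q q' k i α hT hq hni =>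
    have hval : ∀ γ0 : Conc Q D dim, γ0.reg = γ.reg → regVal P γ0 k i α = P.d0 := by
      intro γ0 h0
      unfold regVal
      split_ifs with hik
      · rw [h0]; exact hW _ _ (hni hik)
      · rfl
    obtain ⟨γ', hreach, hloc, hreg⟩ := iter_step P (q, k) (q', k) γ.reg id rfl
      (fun γ0 hr0 hpos => ⟨_, ConcStep.read hT hpos (hval γ0 (hr0.elim id id)) rfl rfl⟩)
      N γ (Or.inl rfl) (by have := hS _ hq; omega)
    refine ⟨n, γ', hre.trans hreach, ?_, ?_⟩
    · intro l hl
      rw [hloc]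
      apply move_bound
      rcases hl with hl | hl
      · right; have := hS l hl; omega
      · left; exact hl
    · intro j α hjα
      rcases hreg with h | h <;> rw [h] <;> exact hW j α hjα
  | @readVal q q' q1 q2 k i α x hx hT hq hik hWmem hT2 hq1 hq2 =>
    set γ1 : Conc Q D dim :=
      ⟨γ.loc - Finsupp.single (q1, k - i) 1 + Finsupp.single (q2, k - i) 1,
        updReg γ.reg (k - i) α x⟩ with hγ1
    have hpos1 : 0 < γ.loc (q1, k - i) := by have := hS _ hq1; omega
    have hstep1 : ConcStep P γ ((q1, Act.write α x, q2), k - i) γ1 :=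
      ConcStep.write hT2 hpos1 rfl rfl
    have hval : ∀ γ0 : Conc Q D dim, γ0.reg = γ1.reg → regVal P γ0 k i α = x := by
      intro γ0 h0
      unfold regVal
      rw [if_pos hik, h0]
      show updReg γ.reg (k - i) α x (k - i) α = x
      simp [updReg]
    have hbnd : ∀ l, γ.loc l - 1 ≤ γ1.loc l := by
      intro l
      show γ.loc l - 1 ≤ (γ.loc - Finsupp.single (q1, k - i) (1 : ℕ)
        + Finsupp.single (q2, k - i) (1 : ℕ)) l
      rw [Finsupp.add_apply, Finsupp.tsub_apply, Finsupp.single_apply, Finsupp.single_apply]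
      split_ifs <;> omega
    have hq' : N ≤ γ1.loc (q, k) := by
      have h1 := hbnd (q, k)
      have := hS _ hq
      omega
    obtain ⟨γ', hreach, hloc, hreg⟩ := iter_step P (q, k) (q', k) γ1.reg id rfl
      (fun γ0 hr0 hpos => ⟨_, ConcStep.read hT hpos (hval γ0 (hr0.elim id id)) rfl rfl⟩)
      N γ1 (Or.inl rfl) hq'
    refine ⟨n, γ', hre.trans (Relation.ReflTransGen.head ⟨_, hstep1⟩ hreach), ?_, ?_⟩
    · intro l hl
      rw [hloc]
      apply move_bound
      rcases hl with hl | hl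
      · right
        have h1 := hbnd l
        have := hS l hl
        omega
      · left; exact hl
    · intro j β hjβ
      have hne : ¬(j = k - i ∧ β = α) := by
        rintro ⟨rfl, rfl⟩; exact hjβ hWmem
      have hv1 : γ1.reg j β = P.d0 := by
        show updReg γ.reg (k - i) α x j β = P.d0
        simp only [updReg, if_neg hne]
        exact hW _ _ hjβ
      rcases hreg with h | h <;> rw [h] <;> exact hv1
  | @write q q' k α x hT hq =>
    have hρ : updReg (updReg γ.reg k α x) k α x = updReg γ.reg k α x := by
      funext j β
      simp only [updReg]
      split_ifs <;> rfl
    obtain ⟨γ', hreach, hloc, hreg⟩ := iter_step P (q, k) (q', k) γ.reg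
      (fun r => updReg r k α x) hρ
      (fun γ0 _ hpos => ⟨_, ConcStep.write hT hpos rfl rfl⟩) N γ (Or.inl rfl)
      (by have := hS _ hq; omega)
    refine ⟨n, γ', hre.trans hreach, ?_, ?_⟩
    · intro l hl
      rw [hloc]
      apply move_bound
      rcases hl with hl | hl
      · right; have := hS l hl; omega
      · left; exact hl
    · intro j β hjβ
      have hjβ1 : (j, β) ∉ σ.W := fun h => hjβ (Set.mem_union_left _ h)
      have hjβ2 : ¬(j = k ∧ β = α) := by
        rintro ⟨rfl, rfl⟩
        exact hjβ (Set.mem_union_right _ rfl)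
      rcases hreg with h | h
      · rw [h]; exact hW _ _ hjβ1
      · rw [h]
        simp only [updReg, if_neg hjβ2]
        exact hW _ _ hjβ1

private lemma realizable_of_reach [DecidableEq Q] {P : Protocol Q D dim} {σ : Abs Q dim}
    (h : AbsReach P (Abs.init P) σ) : Realizable P σ := by
  induction h with
  | refl => exact realizable_init P
  | tail h1 h2 ih =>
    obtain ⟨m, hm⟩ := h2
    exact realizable_step hm ih

end Aux

/-- Soundness and completeness of the abstract semantics (Theorem 3). -/
theorem abstract_sound_complete {Q D : Type} {dim : ℕ} [DecidableEq Q]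
    (P : Protocol Q D dim) (qerr : Q) (k : ℕ) :
    (∃ n : ℕ, ∃ γ : Conc Q D dim,
        ConcReach P (Conc.init P n) γ ∧ 0 < γ.loc (qerr, k)) ↔
    (∃ σ : Abs Q dim, AbsReach P (Abs.init P) σ ∧ (qerr, k) ∈ σ.S) := by
  constructor
  · rintro ⟨n, γ, hre, hpos⟩
    obtain ⟨σ, hr, hsim⟩ := sim_reach hre
    exact ⟨σ, hr, hsim.1 _ hpos⟩
  · rintro ⟨σ, hr, hmem⟩
    obtain ⟨n, γ, hre, hS, -⟩ := realizable_of_reach hr 1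
    exact ⟨n, γ, hre, by have := hS _ hmem; omega⟩
end

section
/- Lifting concrete to abstract executions: Let γ_0 = γ_init^n, m_1, γ_1, …, m_ℓ, γ_ℓ be a concrete execution of a round-based register protocol. Then there exists an abstract execution σ_init →* σ such that the set of non-blank registers of γ_ℓ equals the written-register set W(σ), and for every i ∈ {0,…,ℓ}, the support of the location multiset of γ_i is contained in the location set S(σ). -/
/-!
Each concrete step is simulated by the abstract step with the same move. Along the
simulation one maintains `AbsCovers`: the support of the concrete configuration lies in
`S`, its non-blank registers are exactly `W`, and the current value of every non-blank
register was written by a transition whose source and target, at the register's round,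
lie in `S`. The last clause supplies the witnesses that an abstract read of a non-blank
value requires. Since abstract steps only enlarge `S`, every earlier support stays
covered.
-/

open scoped Classical

variable {Q D : Type} {dim : ℕ}

theorem Finsupp.pos_or_eq_of_pos_tsub_single_add_single {α : Type*} (f : α →₀ ℕ)
    (a b l : α) (h : 0 < (f - Finsupp.single a 1 + Finsupp.single b 1 : α →₀ ℕ) l) :
    0 < f l ∨ l = b := by
  by_cases hl : l = b
  · exact Or.inr hl
  · rw [Finsupp.add_apply, Finsupp.single_eq_of_ne hl, Finsupp.tsub_apply] at h
    omega

theorem Conc.supp_subset_of_loc_eq {γ γ' : Conc Q D dim} {l₀ l₁ : Q × ℕ}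
    (hloc : γ'.loc = γ.loc - Finsupp.single l₀ 1 + Finsupp.single l₁ 1) :
    γ'.supp ⊆ γ.supp ∪ {l₁} := by
  intro l hl
  have hl' : 0 < γ'.loc l := hl
  rw [hloc] at hl'
  exact Finsupp.pos_or_eq_of_pos_tsub_single_add_single _ _ _ _ hl'

theorem regVal_of_le (P : Protocol Q D dim) (γ : Conc Q D dim) {k i : ℕ} (α : Fin dim)
    (h : i ≤ k) : regVal P γ k i α = γ.reg (k - i) α :=
  if_pos h

theorem regVal_of_lt (P : Protocol Q D dim) (γ : Conc Q D dim) {k i : ℕ} (α : Fin dim)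
    (h : k < i) : regVal P γ k i α = P.d0 :=
  if_neg (Nat.not_le.mpr h)

theorem Conc.nonBlank_updReg (P : Protocol Q D dim) {γ γ' : Conc Q D dim} {k : ℕ}
    {α : Fin dim} {x : D} (hx : x ≠ P.d0) (hreg : γ'.reg = updReg γ.reg k α x) :
    γ'.nonBlank P = γ.nonBlank P ∪ {(k, α)} := by
  ext ⟨k', α'⟩
  by_cases h : k' = k ∧ α' = α
  · obtain ⟨rfl, rfl⟩ := h
    simp [Conc.nonBlank, hreg, updReg, hx]
  · have hne : (k', α') ≠ (k, α) := fun e => h (Prod.mk.inj e)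
    simp [Conc.nonBlank, hreg, updReg, h, hne]

theorem AbsStep.S_subset {P : Protocol Q D dim} {σ σ' : Abs Q dim} {mv : Move Q D dim}
    (h : AbsStep P σ mv σ') : σ.S ⊆ σ'.S := by
  cases h <;> exact Set.subset_union_left

structure AbsCovers (P : Protocol Q D dim) (γ : Conc Q D dim) (σ : Abs Q dim) : Prop where
  supp_subset : γ.supp ⊆ σ.S
  nonBlank_eq : γ.nonBlank P = σ.W
  exists_writer : ∀ (k : ℕ) (α : Fin dim), γ.reg k α ≠ P.d0 →
    ∃ q₁ q₂, (q₁, Act.write α (γ.reg k α), q₂) ∈ P.T ∧ (q₁, k) ∈ σ.S ∧ (q₂, k) ∈ σ.S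

namespace AbsCovers

variable {P : Protocol Q D dim}

theorem init [DecidableEq Q] (n : ℕ) : AbsCovers P (Conc.init P n) (Abs.init P) where
  supp_subset l hl := by
    by_contra hne
    have : Finsupp.single (P.q0, 0) n l = 0 := Finsupp.single_eq_of_ne hne
    exact (Nat.ne_of_gt hl) this
  nonBlank_eq := by
    ext
    simp [Conc.nonBlank, Conc.init, Abs.init]
  exists_writer _ _ h := absurd rfl h

theorem of_reg_eq {γ γ' : Conc Q D dim} {σ : Abs Q dim} {l₀ l₁ : Q × ℕ}
    (hσ : AbsCovers P γ σ)
    (hloc : γ'.loc = γ.loc - Finsupp.single l₀ 1 + Finsupp.single l₁ 1)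
    (hreg : γ'.reg = γ.reg) : AbsCovers P γ' ⟨σ.S ∪ {l₁}, σ.W⟩ where
  supp_subset :=
    (Conc.supp_subset_of_loc_eq hloc).trans (Set.union_subset_union_left _ hσ.supp_subset)
  nonBlank_eq := by
    rw [← hσ.nonBlank_eq, Conc.nonBlank, Conc.nonBlank, hreg]
  exists_writer k α h := by
    rw [hreg] at h ⊢
    obtain ⟨q₁, q₂, hT, h₁, h₂⟩ := hσ.exists_writer k α h
    exact ⟨q₁, q₂, hT, Or.inl h₁, Or.inl h₂⟩

theorem of_write {γ γ' : Conc Q D dim} {σ : Abs Q dim} {q q' : Q} {k : ℕ} {α : Fin dim}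
    {x : D} (hσ : AbsCovers P γ σ) (hT : (q, Act.write α x, q') ∈ P.T) (hq : (q, k) ∈ σ.S)
    (hloc : γ'.loc = γ.loc - Finsupp.single (q, k) 1 + Finsupp.single (q', k) 1)
    (hreg : γ'.reg = updReg γ.reg k α x) :
    AbsCovers P γ' ⟨σ.S ∪ {(q', k)}, σ.W ∪ {(k, α)}⟩ where
  supp_subset :=
    (Conc.supp_subset_of_loc_eq hloc).trans (Set.union_subset_union_left _ hσ.supp_subset)
  nonBlank_eq := by
    rw [Conc.nonBlank_updReg P (P.write_ne q α x q' hT) hreg, hσ.nonBlank_eq]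
  exists_writer k' α' h := by
    rw [hreg, updReg] at h ⊢
    by_cases hk : k' = k ∧ α' = α
    · obtain ⟨rfl, rfl⟩ := hk
      simp only [and_self, if_true]
      exact ⟨q, q', hT, Or.inl hq, Or.inr rfl⟩
    · simp only [hk, if_false] at h ⊢
      obtain ⟨q₁, q₂, hT', h₁, h₂⟩ := hσ.exists_writer k' α' h
      exact ⟨q₁, q₂, hT', Or.inl h₁, Or.inl h₂⟩

theorem exists_absStep [DecidableEq Q] {γ γ' : Conc Q D dim} {σ : Abs Q dim}
    {mv : Move Q D dim} (hσ : AbsCovers P γ σ) (hs : ConcStep P γ mv γ') :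
    ∃ σ', AbsStep P σ mv σ' ∧ AbsCovers P γ' σ' := by
  cases hs with
  | incr hT hq hloc hreg =>
    exact ⟨_, .incr hT (hσ.supp_subset hq), hσ.of_reg_eq hloc hreg⟩
  | @read q q' k i α x _ _ hT hq hval hloc hreg =>
    by_cases hx : x = P.d0
    · subst hx
      refine ⟨_, .readBlank hT (hσ.supp_subset hq) fun hik hW => ?_, hσ.of_reg_eq hloc hreg⟩
      rw [← hσ.nonBlank_eq] at hW
      exact hW (regVal_of_le P γ α hik ▸ hval)
    · have hik : i ≤ k := by
        by_contra hlt
        exact hx (hval.symm.trans (regVal_of_lt P γ α (Nat.lt_of_not_le hlt)))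
      have hreg_x : γ.reg (k - i) α = x := regVal_of_le P γ α hik ▸ hval
      have hW : (k - i, α) ∈ σ.W := by
        rw [← hσ.nonBlank_eq]
        show γ.reg (k - i) α ≠ P.d0
        rwa [hreg_x]
      obtain ⟨q₁, q₂, hT', h₁, h₂⟩ := hσ.exists_writer (k - i) α (hreg_x ▸ hx)
      rw [hreg_x] at hT'
      exact ⟨_, .readVal hx hT (hσ.supp_subset hq) hik hW hT' h₁ h₂, hσ.of_reg_eq hloc hreg⟩
  | write hT hq hloc hreg =>
    exact ⟨_, .write hT (hσ.supp_subset hq), hσ.of_write hT (hσ.supp_subset hq) hloc hreg⟩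

end AbsCovers

theorem exists_absReach_covers_prefix [DecidableEq Q] (P : Protocol Q D dim) {ℓ : ℕ}
    {γ : Fin (ℓ + 1) → Conc Q D dim} {m : Fin ℓ → Move Q D dim} {σ₀ : Abs Q dim}
    (h0 : AbsCovers P (γ 0) σ₀)
    (hstep : ∀ i : Fin ℓ, ConcStep P (γ i.castSucc) (m i) (γ i.succ)) (j : Fin (ℓ + 1)) :
    ∃ σ, AbsReach P σ₀ σ ∧ AbsCovers P (γ j) σ ∧ ∀ i ≤ j, (γ i).supp ⊆ σ.S := by
  induction j using Fin.induction with
  | zero =>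
    refine ⟨σ₀, .refl, h0, fun i hi => ?_⟩
    rw [Fin.le_zero_iff.mp hi]
    exact h0.supp_subset
  | succ j ih =>
    obtain ⟨σ, hreach, hσ, hprev⟩ := ih
    obtain ⟨σ', hstep', hσ'⟩ := hσ.exists_absStep (hstep j)
    refine ⟨σ', hreach.tail ⟨m j, hstep'⟩, hσ', fun i hi => ?_⟩
    rcases eq_or_lt_of_le hi with rfl | hlt
    · exact hσ'.supp_subset
    · exact (hprev i (Fin.le_castSucc_iff.mpr hlt)).trans hstep'.S_subset

/-- Lifting concrete executions to abstract executions (Lemma A.1). -/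
theorem lift_concrete_to_abstract {Q D : Type} {dim : ℕ} [DecidableEq Q]
    (P : Protocol Q D dim) (n ℓ : ℕ)
    (γ : Fin (ℓ + 1) → Conc Q D dim) (m : Fin ℓ → Move Q D dim)
    (h0 : γ 0 = Conc.init P n)
    (hstep : ∀ i : Fin ℓ, ConcStep P (γ i.castSucc) (m i) (γ i.succ)) :
    ∃ σ : Abs Q dim,
      AbsReach P (Abs.init P) σ ∧
      Conc.nonBlank P (γ (Fin.last ℓ)) = σ.W ∧
      ∀ i : Fin (ℓ + 1), (γ i).supp ⊆ σ.S := by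
  obtain ⟨σ, hreach, hσ, hsupp⟩ :=
    exists_absReach_covers_prefix P (h0 ▸ AbsCovers.init n) hstep (Fin.last ℓ)
  exact ⟨σ, hreach, hσ.nonBlank_eq, fun i => hsupp i (Fin.le_last i)⟩
end

section
/- Combining executions with equal first-write orders: Let ρ1 : σ_init →* σ1 and ρ2 : σ_init →* σ2 be two abstract executions of a round-based register protocol such that fwo(ρ1) = fwo(ρ2). Then there exists an abstract execution ρ : σ_init →* σ with S(σ) = S(σ1) ∪ S(σ2), W(σ) = W(σ1) = W(σ2), and fwo(ρ) = fwo(ρ1). -/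
open scoped Classical

variable {Q D : Type} {dim : ℕ}

section CombineAux

variable {Q D : Type} {dim : ℕ} {P : Protocol Q D dim}

private lemma Abs.mk_eq {S S' : Set (Q × ℕ)} {W W' : Set (ℕ × Fin dim)}
    (hS : S = S') (hW : W = W') : (⟨S, W⟩ : Abs Q dim) = ⟨S', W'⟩ := by rw [hS, hW]

private lemma absStep_S_mono {σ σ' : Abs Q dim} {m : Move Q D dim}
    (h : AbsStep P σ m σ') : σ.S ⊆ σ'.S := by
  cases h <;> exact Set.subset_union_left

private lemma absRun_S_mono {σ σ' : Abs Q dim} {ms : List (Move Q D dim)}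
    (h : AbsRun P σ ms σ') : σ.S ⊆ σ'.S := by
  induction h with
  | nil => exact subset_rfl
  | cons hs _ ih => exact (absStep_S_mono hs).trans ih

private lemma absRun_append {σ τ σ' : Abs Q dim} {xs ys : List (Move Q D dim)}
    (h1 : AbsRun P σ xs τ) (h2 : AbsRun P τ ys σ') : AbsRun P σ (xs ++ ys) σ' := by
  induction h1 with
  | nil => exact h2
  | cons hs _ ih => exact AbsRun.cons hs (ih h2)

private lemma absRun_split {xs : List (Move Q D dim)} :
    ∀ {σ σ' : Abs Q dim} {ys : List (Move Q D dim)}, AbsRun P σ (xs ++ ys) σ' →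
      ∃ τ, AbsRun P σ xs τ ∧ AbsRun P τ ys σ' := by
  induction xs with
  | nil => exact fun {σ σ' ys} h => ⟨σ, AbsRun.nil σ, h⟩
  | cons m xs ih =>
      intro σ σ' ys h
      cases h with
      | cons hs hr =>
          obtain ⟨τ, ha, hb⟩ := ih hr
          exact ⟨τ, AbsRun.cons hs ha, hb⟩

private lemma absStep_lift {σ σ' : Abs Q dim} {m : Move Q D dim} {T : Set (Q × ℕ)}
    (h : AbsStep P σ m σ') (hT : σ.S ⊆ T) :
    ∃ x, σ'.S = σ.S ∪ {x} ∧ AbsStep P ⟨T, σ.W⟩ m ⟨T ∪ {x}, σ'.W⟩ := by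
  cases h with
  | incr h1 h2 => exact ⟨_, rfl, AbsStep.incr h1 (hT h2)⟩
  | readBlank h1 h2 h3 => exact ⟨_, rfl, AbsStep.readBlank h1 (hT h2) h3⟩
  | readVal hx h1 h2 h3 h4 h5 h6 h7 =>
      exact ⟨_, rfl, AbsStep.readVal hx h1 (hT h2) h3 h4 h5 (hT h6) (hT h7)⟩
  | write h1 h2 => exact ⟨_, rfl, AbsStep.write h1 (hT h2)⟩

private lemma absRun_lift {σ σ' : Abs Q dim} {ms : List (Move Q D dim)}
    (h : AbsRun P σ ms σ') :
    ∀ {T : Set (Q × ℕ)}, σ.S ⊆ T → AbsRun P ⟨T, σ.W⟩ ms ⟨T ∪ σ'.S, σ'.W⟩ := by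
  induction h with
  | nil σ =>
      intro T hT
      rw [Abs.mk_eq (Set.union_eq_self_of_subset_right hT) rfl]
      exact AbsRun.nil _
  | cons hs hr ih =>
      intro T hT
      obtain ⟨x, hS, hstep⟩ := absStep_lift hs hT
      have hrun := ih (T := T ∪ {x})
        (by rw [hS]; exact Set.union_subset_union_left _ hT)
      have hxin : x ∈ _ := absRun_S_mono hr (by rw [hS]; exact Set.mem_union_right _ rfl)
      have heq : ∀ A : Set (Q × ℕ), x ∈ A → T ∪ {x} ∪ A = T ∪ A := by
        intro A hA
        rw [Set.union_assoc]
        exact congrArg (T ∪ ·) (Set.union_eq_self_of_subset_left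
          (Set.singleton_subset_iff.mpr hA))
      rw [Abs.mk_eq (heq _ hxin) rfl] at hrun
      exact AbsRun.cons hstep hrun

private lemma fwo_incr (W : Set (ℕ × Fin dim)) (q q' : Q) (k : ℕ)
    (ms : List (Move Q D dim)) :
    fwo W (((q, Act.incr, q'), k) :: ms) = fwo W ms := rfl

private lemma fwo_read (W : Set (ℕ × Fin dim)) (q q' : Q) (i : ℕ) (α : Fin dim) (x : D)
    (k : ℕ) (ms : List (Move Q D dim)) :
    fwo W (((q, Act.read i α x, q'), k) :: ms) = fwo W ms := rfl

private lemma fwo_write (W : Set (ℕ × Fin dim)) (q q' : Q) (α : Fin dim) (x : D)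
    (k : ℕ) (ms : List (Move Q D dim)) :
    fwo W (((q, Act.write α x, q'), k) :: ms) =
      if (k, α) ∈ W then fwo W ms else (k, α) :: fwo (W ∪ {(k, α)}) ms := rfl

private lemma fwo_append_eq {W : Set (ℕ × Fin dim)} :
    ∀ {u : List (Move Q D dim)}, fwo W u = [] →
      ∀ (l : List (Move Q D dim)), fwo W (u ++ l) = fwo W l := by
  intro u
  induction u with
  | nil => intro _ l; rfl
  | cons m ms ih =>
      intro h l
      obtain ⟨⟨q, a, q'⟩, k⟩ := m
      cases a with
      | incr => rw [List.cons_append, fwo_incr] at *; exact ih h l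
      | read i α x => rw [List.cons_append, fwo_read] at *; exact ih h l
      | write α x =>
          rw [fwo_write] at h
          by_cases hm : (k, α) ∈ W
          · rw [if_pos hm] at h
            rw [List.cons_append, fwo_write, if_pos hm]
            exact ih h l
          · rw [if_neg hm] at h; exact absurd h (by simp)

private lemma absRun_W_of_fwo_nil {σ σ' : Abs Q dim} {ms : List (Move Q D dim)}
    (h : AbsRun P σ ms σ') : fwo σ.W ms = [] → σ'.W = σ.W := by
  induction h with
  | nil => intro _; rfl
  | cons hs hr ih =>
      intro hf
      cases hs with
      | incr h1 h2 => exact ih hf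
      | readBlank h1 h2 h3 => exact ih hf
      | readVal hx h1 h2 h3 h4 h5 h6 h7 => exact ih hf
      | @write q q' k α x h1 h2 =>
          rw [fwo_write] at hf
          split at hf
          · next hm =>
              have hWeq := Set.union_eq_self_of_subset_right
                (Set.singleton_subset_iff.mpr hm)
              exact (ih (by rw [hWeq]; exact hf)).trans hWeq
          · exact absurd hf (by simp)

private lemma fwo_decomp {W : Set (ℕ × Fin dim)} {R : ℕ × Fin dim} {F : List (ℕ × Fin dim)} :
    ∀ {ms : List (Move Q D dim)}, fwo W ms = R :: F →
      ∃ (u : List (Move Q D dim)) (q1 : Q) (x : D) (q2 : Q) (ms' : List (Move Q D dim)),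
        ms = u ++ ((q1, Act.write R.2 x, q2), R.1) :: ms' ∧
        fwo W u = [] ∧ R ∉ W ∧ fwo (W ∪ {R}) ms' = F := by
  intro ms
  induction ms with
  | nil => intro h; simp [fwo] at h
  | cons m ms ih =>
      intro h
      obtain ⟨⟨q, a, q'⟩, k⟩ := m
      cases a with
      | incr =>
          rw [fwo_incr] at h
          obtain ⟨u, q1, x, q2, ms', h1, h2, h3, h4⟩ := ih h
          exact ⟨((q, Act.incr, q'), k) :: u, q1, x, q2, ms', by rw [h1]; rfl,
            by rw [fwo_incr]; exact h2, h3, h4⟩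
      | read i α x0 =>
          rw [fwo_read] at h
          obtain ⟨u, q1, x, q2, ms', h1, h2, h3, h4⟩ := ih h
          exact ⟨((q, Act.read i α x0, q'), k) :: u, q1, x, q2, ms', by rw [h1]; rfl,
            by rw [fwo_read]; exact h2, h3, h4⟩
      | write α x0 =>
          rw [fwo_write] at h
          by_cases hm : (k, α) ∈ W
          · rw [if_pos hm] at h
            obtain ⟨u, q1, x, q2, ms', h1, h2, h3, h4⟩ := ih h
            exact ⟨((q, Act.write α x0, q'), k) :: u, q1, x, q2, ms', by rw [h1]; rfl,
              by rw [fwo_write, if_pos hm]; exact h2, h3, h4⟩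
          · rw [if_neg hm] at h
            injection h with hR hF
            subst hR
            exact ⟨[], q, x0, q', ms, rfl, rfl, hm, hF⟩

private lemma combine_aux (P : Protocol Q D dim) :
    ∀ (ms1 : List (Move Q D dim)) {ms2 : List (Move Q D dim)} {σa σb σ1 σ2 : Abs Q dim},
      AbsRun P σa ms1 σ1 → AbsRun P σb ms2 σ2 → σa.W = σb.W →
      fwo σa.W ms1 = fwo σb.W ms2 →
      ∃ ms σ, AbsRun P ⟨σa.S ∪ σb.S, σa.W⟩ ms σ ∧ σ.S = σ1.S ∪ σ2.S ∧
        σ.W = σ1.W ∧ σ.W = σ2.W ∧ fwo σa.W ms = fwo σa.W ms1 := by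
  intro ms1
  induction ms1 with
  | nil =>
      intro ms2 σa σb σ1 σ2 h1 h2 hW hf
      cases h1
      have hf2 : fwo σb.W ms2 = [] := hf.symm
      have hlift := absRun_lift h2 (T := σa.S ∪ σb.S) Set.subset_union_right
      have hW2 : σ2.W = σb.W := absRun_W_of_fwo_nil h2 hf2
      refine ⟨ms2, ⟨(σa.S ∪ σb.S) ∪ σ2.S, σ2.W⟩, by rw [hW]; exact hlift, ?_, ?_, rfl, ?_⟩
      · show (σa.S ∪ σb.S) ∪ σ2.S = σa.S ∪ σ2.S
        rw [Set.union_assoc]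
        exact congrArg (σa.S ∪ ·)
          (Set.union_eq_self_of_subset_left (absRun_S_mono h2))
      · show σ2.W = σa.W
        rw [hW2, hW]
      · show fwo σa.W ms2 = fwo σa.W []
        rw [hW, hf2]; rfl
  | cons m tl ih =>
      intro ms2 σa σb σ1 σ2 h1 h2 hW hf
      cases h1 with
      | cons hs hr =>
      cases hs with
      | @incr q q' k hT hq =>
          have hf' : fwo σa.W tl = fwo σb.W ms2 := by rw [← hf, fwo_incr]
          obtain ⟨ms, σ, hrun, hS, hW1, hW2, hfr⟩ := ih hr h2 hW hf'
          rw [Abs.mk_eq (Set.union_right_comm _ _ _) rfl] at hrun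
          exact ⟨((q, Act.incr, q'), k) :: ms, σ,
            AbsRun.cons (AbsStep.incr hT (Set.mem_union_left _ hq)) hrun,
            hS, hW1, hW2, hfr⟩
      | @readBlank q q' k i α hT hq hb =>
          have hf' : fwo σa.W tl = fwo σb.W ms2 := by rw [← hf, fwo_read]
          obtain ⟨ms, σ, hrun, hS, hW1, hW2, hfr⟩ := ih hr h2 hW hf'
          rw [Abs.mk_eq (Set.union_right_comm _ _ _) rfl] at hrun
          exact ⟨((q, Act.read i α P.d0, q'), k) :: ms, σ,
            AbsRun.cons (AbsStep.readBlank hT (Set.mem_union_left _ hq) hb) hrun,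
            hS, hW1, hW2, hfr⟩
      | @readVal q q' q1 q2 k i α x hx hT hq hik hWm hT2 hq1 hq2 =>
          have hf' : fwo σa.W tl = fwo σb.W ms2 := by rw [← hf, fwo_read]
          obtain ⟨ms, σ, hrun, hS, hW1, hW2, hfr⟩ := ih hr h2 hW hf'
          rw [Abs.mk_eq (Set.union_right_comm _ _ _) rfl] at hrun
          exact ⟨((q, Act.read i α x, q'), k) :: ms, σ, AbsRun.cons
            (AbsStep.readVal hx hT (Set.mem_union_left _ hq) hik hWm hT2
              (Set.mem_union_left _ hq1) (Set.mem_union_left _ hq2)) hrun,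
            hS, hW1, hW2, hfr⟩
      | @write q q' k α x hT hq =>
          by_cases hm : (k, α) ∈ σa.W
          · have hWeq : σa.W ∪ {(k, α)} = σa.W :=
              Set.union_eq_self_of_subset_right (Set.singleton_subset_iff.mpr hm)
            have hf' : fwo (σa.W ∪ {(k, α)}) tl = fwo σb.W ms2 := by
              rw [hWeq, ← hf, fwo_write, if_pos hm]
            obtain ⟨ms, σ, hrun, hS, hW1, hW2, hfr⟩ :=
              ih hr h2 (hWeq.trans hW) hf'
            rw [Abs.mk_eq (Set.union_right_comm _ _ _) rfl] at hrun
            refine ⟨((q, Act.write α x, q'), k) :: ms, σ,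
              AbsRun.cons (AbsStep.write hT (Set.mem_union_left _ hq)) ?_,
              hS, hW1, hW2, ?_⟩
            · exact hrun
            · rw [fwo_write, if_pos hm, fwo_write, if_pos hm]
              rw [← hWeq]; exact hfr
          · -- first write of (k, α)
            have hfc : fwo σa.W (((q, Act.write α x, q'), k) :: tl)
                = (k, α) :: fwo (σa.W ∪ {(k, α)}) tl := by rw [fwo_write, if_neg hm]
            have hd := fwo_decomp (W := σb.W) (R := (k, α))
              (F := fwo (σa.W ∪ {(k, α)}) tl) (by rw [← hf, hfc])
            obtain ⟨u, q1, x2, q2, ms2', hms2, hu, hRmem, hfm'⟩ := hd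
            rw [show ((q1, Act.write (Prod.snd (k, α)) x2, q2), Prod.fst (k, α))
              = ((q1, Act.write α x2, q2), k) from rfl] at hms2
            subst hms2
            obtain ⟨τ, hru, hrw⟩ := absRun_split h2
            cases hrw with
            | cons hw hr2 =>
            cases hw with
            | write hT2 hq1 =>
            have hτW : τ.W = σb.W := absRun_W_of_fwo_nil hru hu
            have hWa' : σa.W ∪ {(k, α)} = τ.W ∪ {(k, α)} := by rw [hτW, hW]
            have hf'' : fwo (σa.W ∪ {(k, α)}) tl = fwo (τ.W ∪ {(k, α)}) ms2' := by
              rw [hτW]; exact hfm'.symm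
            obtain ⟨msr, σ, hrun, hSa, hW1, hW2, hfr⟩ := ih hr hr2 hWa' hf''
            have hbτ : σb.S ⊆ τ.S := absRun_S_mono hru
            have hliftu := absRun_lift hru (T := σa.S ∪ σb.S) Set.subset_union_right
            have hstep1 : AbsStep P ⟨(σa.S ∪ σb.S) ∪ τ.S, τ.W⟩ ((q, Act.write α x, q'), k)
                ⟨((σa.S ∪ σb.S) ∪ τ.S) ∪ {(q', k)}, τ.W ∪ {(k, α)}⟩ :=
              AbsStep.write hT (Set.mem_union_left _ (Set.mem_union_left _ hq))
            have hstep2 : AbsStep P ⟨((σa.S ∪ σb.S) ∪ τ.S) ∪ {(q', k)}, τ.W ∪ {(k, α)}⟩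
                ((q1, Act.write α x2, q2), k)
                ⟨(((σa.S ∪ σb.S) ∪ τ.S) ∪ {(q', k)}) ∪ {(q2, k)}, (τ.W ∪ {(k, α)}) ∪ {(k, α)}⟩ :=
              AbsStep.write hT2 (Set.mem_union_left _ (Set.mem_union_right _ hq1))
            have hse : (⟨(((σa.S ∪ σb.S) ∪ τ.S) ∪ {(q', k)}) ∪ {(q2, k)},
                  (τ.W ∪ {(k, α)}) ∪ {(k, α)}⟩ : Abs Q dim)
                = ⟨(σa.S ∪ {(q', k)}) ∪ (τ.S ∪ {(q2, k)}), σa.W ∪ {(k, α)}⟩ := by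
              refine Abs.mk_eq ?_ ?_
              · ext p
                have hb := @hbτ p
                simp only [Set.mem_union, Set.mem_singleton_iff] at *
                tauto
              · rw [hτW, ← hW, Set.union_assoc, Set.union_self]
            rw [← hse] at hrun
            refine ⟨u ++ ((q, Act.write α x, q'), k) :: ((q1, Act.write α x2, q2), k) :: msr,
              σ, ?_, hSa, hW1, hW2, ?_⟩
            · have hall := absRun_append hliftu
                (AbsRun.cons hstep1 (AbsRun.cons hstep2 hrun))
              rw [hW]; exact hall
            · have hu' : fwo σa.W u = [] := by rw [hW]; exact hu
              rw [fwo_append_eq hu', hfc, fwo_write, if_neg hm, fwo_write,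
                if_pos (show (k, α) ∈ σa.W ∪ {(k, α)} from Set.mem_union_right _ rfl)]
              exact congrArg _ hfr

end CombineAux


/-- Combining executions with equal first-write orders (Lemma 5). -/
theorem combine_equal_fwo {Q D : Type} {dim : ℕ}
    (P : Protocol Q D dim) (ms1 ms2 : List (Move Q D dim)) (σ1 σ2 : Abs Q dim)
    (h1 : AbsRun P (Abs.init P) ms1 σ1) (h2 : AbsRun P (Abs.init P) ms2 σ2)
    (hfwo : fwo ∅ ms1 = fwo ∅ ms2) :
    ∃ ms : List (Move Q D dim), ∃ σ : Abs Q dim,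
      AbsRun P (Abs.init P) ms σ ∧
      σ.S = σ1.S ∪ σ2.S ∧
      σ.W = σ1.W ∧ σ.W = σ2.W ∧
      fwo ∅ ms = fwo ∅ ms1 := by
  obtain ⟨ms, σ, hrun, hS, hW1, hW2, hf⟩ := combine_aux P ms1 h1 h2 rfl hfwo
  rw [show (⟨(Abs.init P).S ∪ (Abs.init P).S, (Abs.init P).W⟩ : Abs Q dim) = Abs.init P
    from Abs.mk_eq (Set.union_self _) rfl] at hrun
  exact ⟨ms, σ, hrun, hS, hW1, hW2, hf⟩
end

section
/- Combining executions with equal windowed first-write projections: Let ρ1 : σ_init →* σ1 and ρ2 : σ_init →* σ2 be abstract executions of a round-based register protocol with visibility range v, such that for every k ∈ ℕ the restrictions of fwo(ρ1) and fwo(ρ2) to registers of rounds in the window [k−v, k] are equal. Then there exists an abstract execution ρ : σ_init →* σ with S(σ) = S(σ1) ∪ S(σ2), W(σ) = W(σ1) = W(σ2), and for all k ∈ ℕ, the restriction of fwo(ρ) to rounds [k−v, k] equals the corresponding restriction of fwo(ρ1). -/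
open scoped Classical

variable {Q D : Type} {dim : ℕ}

/-!
Merge the executions by sorting all their moves; this works for any finite family of executions
whose first-write orders pairwise agree on windows. Call `w` a predecessor of `u` when some member
first writes `w` before it first writes `u`, and `w.1 ≤ u.1 + v`. This relation is acyclic: on a
cycle, a register `h` of maximal round can be skipped, because its successor lies in the window of
`h`, where all members order first writes alike. Rank registers by their number of predecessors.

The level of a move is the highest rank of a register that its member has written up to that move
at a round not above the move's; moves are scheduled by level, then by member, then by position.
Locations and written registers that a move needs come from earlier moves of its member at lower
rounds, which have lower level. A move reading the initial value of a register `u` of its window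
has level below the rank of `u`, while every write of `u` has level at least that rank. For the
same reason first writes in the merge occur in order of rank, which extends every member's order
of first writes within windows.
-/

section Acyclic

variable {α β : Type*} {r : α → α → Prop}

open Relation in
/-- Deleting a point `h` of maximal height turns every path avoiding `h` at its ends into a
path avoiding `h` altogether, so induction on the carrier excludes cycles. -/
theorem Relation.not_transGen_self_of_shortcut [LinearOrder β] (f : α → β) (A : Finset α)
    (hA : ∀ a b, r a b → a ∈ A ∧ b ∈ A) (hirr : ∀ a, ¬ r a a)
    (hshort : ∀ w h y, r w h → r h y → f w ≤ f h → f y ≤ f h → r w y) (a : α) :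
    ¬ TransGen r a a := by
  induction A using Finset.induction_on_max_value f generalizing r a with
  | empty =>
    intro hcyc
    obtain ⟨b, hab, -⟩ := TransGen.head'_iff.1 hcyc
    simpa using (hA _ _ hab).1
  | insert h s _ hmax ih =>
    have hle : ∀ x ∈ insert h s, f x ≤ f h := by
      intro x hx
      rcases Finset.mem_insert.1 hx with rfl | hx
      exacts [le_rfl, hmax x hx]
    set r' : α → α → Prop := fun x y => x ≠ h ∧ y ≠ h ∧ r x y
    have ih' : ∀ a, ¬ TransGen r' a a := ih
      (fun a b hab => ⟨Finset.mem_of_mem_insert_of_ne (hA _ _ hab.2.2).1 hab.1,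
        Finset.mem_of_mem_insert_of_ne (hA _ _ hab.2.2).2 hab.2.1⟩)
      (fun a ha => hirr a ha.2.2)
      (fun w _ y hw hy h₁ h₂ => ⟨hw.1, hy.2.1, hshort _ _ _ hw.2.2 hy.2.2 h₁ h₂⟩)
    have avoid : ∀ {a b}, TransGen r a b → a ≠ h → ∃ c, c ≠ h ∧ ReflTransGen r' a c ∧ r c b := by
      intro a b hab ha
      induction hab with
      | single hab => exact ⟨a, ha, .refl, hab⟩
      | @tail b₀ b _ hb ih =>
        obtain ⟨c, hc, hac, hcb₀⟩ := ih
        by_cases hb₀ : b₀ = h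
        · subst hb₀
          exact ⟨c, hc, hac, hshort _ _ _ hcb₀ hb (hle c (hA _ _ hcb₀).1) (hle b (hA _ _ hb).2)⟩
        · exact ⟨b₀, hb₀, hac.tail ⟨hc, hb₀, hcb₀⟩, hb⟩
    have hne : ∀ a, a ≠ h → ¬ TransGen r a a := fun a ha hcyc => by
      obtain ⟨c, hc, hac, hca⟩ := avoid hcyc ha
      exact ih' a (.tail' hac ⟨hc, ha, hca⟩)
    intro hcyc
    by_cases ha : a = h
    · subst ha
      obtain ⟨y, hay, hya⟩ := TransGen.head'_iff.1 hcyc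
      exact hne y (fun hy => hirr a (hy ▸ hay)) (.tail' hya hay)
    · exact hne a ha hcyc

open Relation in
lemma card_filter_reflTransGen_lt {A : Finset α} (hacyc : ∀ a, ¬ TransGen r a a) {u u' : α}
    (hu' : u' ∈ A) (h : r u u') :
    (A.filter (ReflTransGen r · u)).card < (A.filter (ReflTransGen r · u')).card := by
  refine Finset.card_lt_card ((Finset.ssubset_iff_of_subset ?_).2 ⟨u', ?_, ?_⟩)
  · intro w hw
    rw [Finset.mem_filter] at hw ⊢
    exact ⟨hw.1, hw.2.tail h⟩
  · exact Finset.mem_filter.2 ⟨hu', .refl⟩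
  · exact fun hu'u => hacyc u' (.tail' (Finset.mem_filter.1 hu'u).2 h)

end Acyclic

section ListOrder

variable {α β : Type*}

lemma Finset.exists_list_pairwise_lt [LinearOrder β] (s : Finset α) {f : α → β}
    (hf : Set.InjOn f s) : ∃ L : List α, (∀ a, a ∈ L ↔ a ∈ s) ∧ L.Pairwise (f · < f ·) := by
  have hperm := s.toList.mergeSort_perm fun a b => f a ≤ f b
  have hle := List.pairwise_mergeSort (le := fun a b => decide (f a ≤ f b))
    (fun a b c hab hbc => by simpa using (of_decide_eq_true hab).trans (of_decide_eq_true hbc))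
    (fun a b => by simpa using le_total (f a) (f b)) s.toList
  have hmem : ∀ a, a ∈ s.toList.mergeSort (fun a b => f a ≤ f b) ↔ a ∈ s := fun a => by
    rw [hperm.mem_iff, Finset.mem_toList]
  refine ⟨_, hmem, ((hle.and (hperm.nodup_iff.2 s.nodup_toList)).imp_of_mem ?_)⟩
  rintro a b ha hb ⟨hab, hne⟩
  exact (of_decide_eq_true hab).lt_of_ne fun h => hne (hf ((hmem a).1 ha) ((hmem b).1 hb) h)

lemma List.Pairwise.mem_take_iff [Preorder β] {f : α → β} {L : List α} {n : ℕ} {a : α}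
    (h : L.Pairwise (f · < f ·)) (hn : n < L.length) : a ∈ L.take n ↔ a ∈ L ∧ f a < f L[n] := by
  constructor
  · intro ha
    obtain ⟨j, hj, rfl⟩ := List.mem_take_iff_getElem.1 ha
    exact ⟨List.getElem_mem _, List.pairwise_iff_getElem.1 h j n _ hn (by omega)⟩
  · rintro ⟨ha, hlt⟩
    obtain ⟨j, hj, rfl⟩ := List.getElem_of_mem ha
    rcases lt_or_ge j n with hjn | hjn
    · exact List.mem_take_iff_getElem.2 ⟨j, by omega, rfl⟩
    · rcases hjn.eq_or_lt with rfl | hjn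
      · exact absurd hlt (lt_irrefl _)
      · exact absurd hlt (List.pairwise_iff_getElem.1 h n j hn hj hjn).asymm

lemma List.Pairwise.rel_of_pairwise {r s : α → α → Prop} {L : List α} {a b : α}
    (hr : L.Pairwise r) (hs : L.Pairwise s) (ha : a ∈ L) (hb : b ∈ L) (hab : r a b)
    (hba : ¬ r b a) : s a b := by
  obtain ⟨i, hi, rfl⟩ := List.getElem_of_mem ha
  obtain ⟨j, hj, rfl⟩ := List.getElem_of_mem hb
  rcases lt_trichotomy i j with hij | rfl | hij
  · exact List.pairwise_iff_getElem.1 hs i j hi hj hij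
  · exact absurd hab hba
  · exact absurd (List.pairwise_iff_getElem.1 hr j i hj hi hij) hba

end ListOrder

namespace Move

def writtenReg : Move Q D dim → Option (ℕ × Fin dim)
  | ((_, Act.write α _, _), k) => some (k, α)
  | _ => none

def target : Move Q D dim → Q × ℕ
  | ((_, Act.incr, q'), k) => (q', k + 1)
  | ((_, _, q'), k) => (q', k)

lemma round_le_target (m : Move Q D dim) : m.2 ≤ m.target.2 := by
  rcases m with ⟨⟨q, a, q'⟩, k⟩
  cases a <;> simp [target]

lemma round_eq_of_writtenReg {m : Move Q D dim} {u : ℕ × Fin dim}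
    (h : m.writtenReg = some u) : m.2 = u.1 := by
  rcases m with ⟨⟨q, a, q'⟩, k⟩
  cases a <;> simp [writtenReg] at h
  simp [← h]

end Move

def IsWritten (l : List (Move Q D dim)) (u : ℕ × Fin dim) : Prop :=
  ∃ m ∈ l, m.writtenReg = some u

lemma isWritten_cons {l : List (Move Q D dim)} {m : Move Q D dim} {u : ℕ × Fin dim} :
    IsWritten (m :: l) u ↔ m.writtenReg = some u ∨ IsWritten l u := by
  simp [IsWritten]

def Abs.next (σ : Abs Q dim) (m : Move Q D dim) : Abs Q dim :=
  ⟨σ.S ∪ {m.target}, σ.W ∪ {u | m.writtenReg = some u}⟩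

/-- An abstract step is determined by its source and its move (`AbsStep.eq_next`), so only
whether the move is enabled is in question. -/
def AbsEnabled (P : Protocol Q D dim) (σ : Abs Q dim) (m : Move Q D dim) : Prop :=
  AbsStep P σ m (σ.next m)

lemma AbsStep.eq_next {P : Protocol Q D dim} {σ σ' : Abs Q dim} {m : Move Q D dim}
    (h : AbsStep P σ m σ') : σ' = σ.next m := by
  cases h <;> simp [Abs.next, Move.target, Move.writtenReg]

lemma AbsRun.eq_foldl {P : Protocol Q D dim} {σ₀ σ : Abs Q dim} {l : List (Move Q D dim)}
    (h : AbsRun P σ₀ l σ) : σ = l.foldl Abs.next σ₀ := by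
  induction h with
  | nil => rfl
  | cons hstep _ ih => rw [List.foldl_cons, ← hstep.eq_next, ih]

lemma absRun_foldl_iff {P : Protocol Q D dim} {σ₀ : Abs Q dim} {l : List (Move Q D dim)} :
    AbsRun P σ₀ l (l.foldl Abs.next σ₀) ↔
      ∀ n (hn : n < l.length), AbsEnabled P ((l.take n).foldl Abs.next σ₀) l[n] := by
  induction l generalizing σ₀ with
  | nil => simpa using AbsRun.nil σ₀
  | cons m l ih =>
    constructor
    · rintro (_ | ⟨hstep, hrun⟩)
      obtain rfl := hstep.eq_next
      rintro (_ | n) hn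
      · exact hstep
      · exact ih.1 hrun n (by simpa using hn)
    · intro h
      exact .cons (h 0 (by simp)) (ih.2 fun n hn => h (n + 1) (by simpa using hn))

lemma Abs.foldl_next_S (σ₀ : Abs Q dim) (l : List (Move Q D dim)) :
    (l.foldl Abs.next σ₀).S = σ₀.S ∪ {ℓ | ∃ m ∈ l, m.target = ℓ} := by
  induction l generalizing σ₀ with
  | nil => simp
  | cons m l ih =>
    ext ℓ
    simp only [List.foldl_cons, ih, Abs.next, List.mem_cons]
    aesop

lemma Abs.foldl_next_W (σ₀ : Abs Q dim) (l : List (Move Q D dim)) :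
    (l.foldl Abs.next σ₀).W = σ₀.W ∪ {u | IsWritten l u} := by
  induction l generalizing σ₀ with
  | nil => simp [IsWritten]
  | cons m l ih =>
    ext u
    simp only [List.foldl_cons, ih, Abs.next, Set.mem_union, Set.mem_ofPred_eq, isWritten_cons]
    tauto

lemma Abs.foldl_next_S_of_mem_iff (σ₀ : Abs Q dim) {l l₁ l₂ : List (Move Q D dim)}
    (h : ∀ m, m ∈ l ↔ m ∈ l₁ ∨ m ∈ l₂) :
    (l.foldl Abs.next σ₀).S = (l₁.foldl Abs.next σ₀).S ∪ (l₂.foldl Abs.next σ₀).S := by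
  ext ℓ
  simp only [Abs.foldl_next_S, Set.mem_union, Set.mem_ofPred_eq, h]
  aesop

lemma Abs.foldl_next_W_of_isWritten_iff (σ₀ : Abs Q dim) {l l' : List (Move Q D dim)}
    (h : ∀ u, IsWritten l u ↔ IsWritten l' u) :
    (l.foldl Abs.next σ₀).W = (l'.foldl Abs.next σ₀).W := by
  simp only [Abs.foldl_next_W, h]

lemma AbsEnabled.transfer {P : Protocol Q D dim} {σ σ' : Abs Q dim} {m : Move Q D dim}
    (h : AbsEnabled P σ m)
    (hS : ∀ ℓ ∈ σ.S, ℓ.2 ≤ m.2 → ℓ ∈ σ'.S)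
    (hW : ∀ u ∈ σ.W, u.1 ≤ m.2 → u ∈ σ'.W)
    (hblank : ∀ u ∉ σ.W, m.2 ≤ u.1 + P.v → m.writtenReg = none → u ∉ σ'.W) :
    AbsEnabled P σ' m := by
  obtain ⟨⟨q, a, q'⟩, k⟩ := m
  obtain ⟨σ₁, h⟩ : ∃ σ₁, AbsStep P σ ((q, a, q'), k) σ₁ := ⟨_, h⟩
  suffices ∃ σ₂, AbsStep P σ' ((q, a, q'), k) σ₂ by
    obtain ⟨σ₂, h₂⟩ := this
    obtain rfl := h₂.eq_next
    exact h₂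
  cases h with
  | incr hT hq => exact ⟨_, .incr hT (hS _ hq le_rfl)⟩
  | readBlank hT hq hB =>
    refine ⟨_, .readBlank hT (hS _ hq le_rfl) fun hik => hblank _ (hB hik) ?_ rfl⟩
    have := P.read_le _ _ _ _ _ hT
    dsimp only
    omega
  | readVal hx hT hq hik hw hT' hq₁ hq₂ =>
    exact ⟨_, .readVal hx hT (hS _ hq le_rfl) hik (hW _ hw (Nat.sub_le _ _)) hT'
      (hS _ hq₁ (Nat.sub_le _ _)) (hS _ hq₂ (Nat.sub_le _ _))⟩
  | write hT hq => exact ⟨_, .write hT (hS _ hq le_rfl)⟩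

section FirstWrites

/-- Position of the first write of `u` in `l`; it is `l.length` if `u` is never written. -/
noncomputable def firstWriteIdx (l : List (Move Q D dim)) (u : ℕ × Fin dim) : ℕ :=
  l.findIdx fun m => m.writtenReg = some u

def FirstWrittenBefore (l : List (Move Q D dim)) (u u' : ℕ × Fin dim) : Prop :=
  IsWritten l u' ∧ firstWriteIdx l u < firstWriteIdx l u'

variable {l : List (Move Q D dim)} {m : Move Q D dim} {u u' u'' : ℕ × Fin dim} {n : ℕ}

lemma firstWriteIdx_lt_length_iff : firstWriteIdx l u < l.length ↔ IsWritten l u := by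
  simp [firstWriteIdx, List.findIdx_lt_length, IsWritten]

lemma writtenReg_getElem_firstWriteIdx (h : IsWritten l u) :
    (l[firstWriteIdx l u]'(firstWriteIdx_lt_length_iff.2 h)).writtenReg = some u :=
  of_decide_eq_true (List.findIdx_getElem (w := firstWriteIdx_lt_length_iff.2 h))

lemma isWritten_take_iff : IsWritten (l.take n) u ↔ IsWritten l u ∧ firstWriteIdx l u < n := by
  rw [← firstWriteIdx_lt_length_iff, ← firstWriteIdx_lt_length_iff, firstWriteIdx,
    List.findIdx_take, List.length_take, ← firstWriteIdx]
  omega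

lemma IsWritten.of_take (h : IsWritten (l.take n) u) : IsWritten l u :=
  (isWritten_take_iff.1 h).1

lemma IsWritten.take_mono {n' : ℕ} (h : IsWritten (l.take n) u) (hn : n ≤ n') :
    IsWritten (l.take n') u :=
  isWritten_take_iff.2 ⟨h.of_take, (isWritten_take_iff.1 h).2.trans_le hn⟩

lemma isWritten_take_succ (hn : n < l.length) :
    IsWritten (l.take (n + 1)) u ↔ IsWritten (l.take n) u ∨ l[n].writtenReg = some u := by
  simp only [IsWritten, List.take_succ_eq_append_getElem hn, List.mem_append, List.mem_singleton,
    or_and_right, exists_or, exists_eq_left]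

lemma firstWriteIdx_injOn (hu : IsWritten l u) (h : firstWriteIdx l u = firstWriteIdx l u') :
    u = u' := by
  have hu' : IsWritten l u' := firstWriteIdx_lt_length_iff.1 (h ▸ firstWriteIdx_lt_length_iff.2 hu)
  have h₁ := writtenReg_getElem_firstWriteIdx hu
  have h₂ := writtenReg_getElem_firstWriteIdx hu'
  simp only [h] at h₁
  exact Option.some_injective _ (h₁.symm.trans h₂)

lemma FirstWrittenBefore.isWritten_left (h : FirstWrittenBefore l u u') : IsWritten l u :=
  firstWriteIdx_lt_length_iff.1 (h.2.trans (firstWriteIdx_lt_length_iff.2 h.1))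

lemma FirstWrittenBefore.irrefl : ¬ FirstWrittenBefore l u u := fun h => h.2.false

lemma FirstWrittenBefore.asymm (h : FirstWrittenBefore l u u') : ¬ FirstWrittenBefore l u' u :=
  fun h' => h.2.asymm h'.2

lemma FirstWrittenBefore.trans (h : FirstWrittenBefore l u u') (h' : FirstWrittenBefore l u' u'') :
    FirstWrittenBefore l u u'' :=
  ⟨h'.1, h.2.trans h'.2⟩

lemma firstWrittenBefore_or_firstWrittenBefore (hu : IsWritten l u) (hu' : IsWritten l u')
    (hne : u ≠ u') : FirstWrittenBefore l u u' ∨ FirstWrittenBefore l u' u := by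
  rcases lt_trichotomy (firstWriteIdx l u) (firstWriteIdx l u') with h | h | h
  · exact .inl ⟨hu', h⟩
  · exact absurd (firstWriteIdx_injOn hu h) hne
  · exact .inr ⟨hu, h⟩

lemma firstWrittenBefore_of_take (hu : IsWritten (l.take n) u) (hu' : ¬ IsWritten (l.take n) u')
    (hu'l : IsWritten l u') : FirstWrittenBefore l u u' := by
  rw [isWritten_take_iff] at hu hu'
  exact ⟨hu'l, hu.2.trans_le (not_lt.1 fun h => hu' ⟨hu'l, h⟩)⟩

lemma firstWrittenBefore_of_forall (hu' : IsWritten l u')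
    (h : ∀ n (hn : n < l.length), l[n].writtenReg = some u' → IsWritten (l.take n) u) :
    FirstWrittenBefore l u u' :=
  ⟨hu', (isWritten_take_iff.1 (h _ _ (writtenReg_getElem_firstWriteIdx hu'))).2⟩

lemma FirstWrittenBefore.cons (h : FirstWrittenBefore l u u') (hm : m.writtenReg ≠ some u') :
    FirstWrittenBefore (m :: l) u u' := by
  refine ⟨isWritten_cons.2 (.inr h.1), ?_⟩
  have := h.2
  simp only [firstWriteIdx, List.findIdx_cons, hm, decide_false, cond_false] at this ⊢
  by_cases hu : m.writtenReg = some u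
  · simp [hu]
  · simpa [hu] using this

lemma firstWrittenBefore_cons_self (hm : m.writtenReg = some u) (hu' : IsWritten l u')
    (hne : u ≠ u') : FirstWrittenBefore (m :: l) u u' := by
  refine ⟨isWritten_cons.2 (.inr hu'), ?_⟩
  simp [firstWriteIdx, List.findIdx_cons, hm, hne]

end FirstWrites

section FirstWriteOrder

variable {l l' : List (Move Q D dim)} {u u' : ℕ × Fin dim}

lemma mem_fwo {W : Set (ℕ × Fin dim)} : u ∈ fwo W l ↔ IsWritten l u ∧ u ∉ W := by
  induction l generalizing W with
  | nil => simp [fwo, IsWritten]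
  | cons m l ih =>
    rcases m with ⟨⟨q, a, q'⟩, k⟩
    cases a with
    | write α x =>
      simp only [fwo]
      split_ifs with hW
      · simp only [ih, isWritten_cons, Move.writtenReg, Option.some.injEq]
        by_cases hu : u = (k, α) <;> aesop
      · simp only [ih, isWritten_cons, Move.writtenReg, Option.some.injEq, List.mem_cons]
        by_cases hu : u = (k, α) <;> aesop
    | _ => simp [fwo, ih, isWritten_cons, Move.writtenReg]

lemma pairwise_fwo (W : Set (ℕ × Fin dim)) (l : List (Move Q D dim)) :
    (fwo W l).Pairwise (FirstWrittenBefore l) := by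
  induction l generalizing W with
  | nil => simp [fwo]
  | cons m l ih =>
    have tail : ∀ W', (∀ u ∈ fwo W' l, m.writtenReg ≠ some u) →
        (fwo W' l).Pairwise (FirstWrittenBefore (m :: l)) := fun W' hm =>
      (ih W').imp_of_mem fun _ hb h => h.cons (hm _ hb)
    rcases m with ⟨⟨q, a, q'⟩, k⟩
    cases a with
    | write α x =>
      simp only [fwo]
      split_ifs with hW
      · refine tail W fun u hu h => (mem_fwo.1 hu).2 ?_
        cases h
        exact hW
      · refine .cons (fun u hu => firstWrittenBefore_cons_self rfl (mem_fwo.1 hu).1 ?_)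
          (tail _ fun u hu h => (mem_fwo.1 hu).2 ?_)
        · rintro rfl
          exact (mem_fwo.1 hu).2 (.inr rfl)
        · cases h
          exact .inr rfl
    | _ => exact tail W fun _ _ => by simp [Move.writtenReg]

lemma mem_winproj_fwo_empty {v k : ℕ} :
    u ∈ winproj v k (fwo ∅ l) ↔ IsWritten l u ∧ k - v ≤ u.1 ∧ u.1 ≤ k := by
  simp [winproj, mem_fwo]

lemma pairwise_winproj_fwo_empty (v k : ℕ) (l : List (Move Q D dim)) :
    (winproj v k (fwo ∅ l)).Pairwise (FirstWrittenBefore l) :=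
  (pairwise_fwo ∅ l).filter _

/-- The hypothesis on windowed first-write projections, in pairwise form (see
`winproj_fwo_eq_iff_windowAgree`). -/
def WindowAgree (v : ℕ) (l l' : List (Move Q D dim)) : Prop :=
  (∀ u, IsWritten l u ↔ IsWritten l' u) ∧
  ∀ u u' : ℕ × Fin dim, u.1 ≤ u'.1 + v → u'.1 ≤ u.1 + v →
    (FirstWrittenBefore l u u' ↔ FirstWrittenBefore l' u u')

lemma WindowAgree.refl (v : ℕ) (l : List (Move Q D dim)) : WindowAgree v l l :=
  ⟨fun _ => .rfl, fun _ _ _ _ => .rfl⟩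

lemma WindowAgree.symm {v : ℕ} (h : WindowAgree v l l') : WindowAgree v l' l :=
  ⟨fun u => (h.1 u).symm, fun u u' h₁ h₂ => (h.2 u u' h₁ h₂).symm⟩

lemma firstWrittenBefore_of_winproj_eq {v : ℕ}
    (h : ∀ k, winproj v k (fwo ∅ l) = winproj v k (fwo ∅ l'))
    (h₁ : u.1 ≤ u'.1 + v) (h₂ : u'.1 ≤ u.1 + v) (hlt : FirstWrittenBefore l u u') :
    FirstWrittenBefore l' u u' := by
  set k := max u.1 u'.1
  have hu : u ∈ winproj v k (fwo ∅ l) :=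
    mem_winproj_fwo_empty.2 ⟨hlt.isWritten_left, by omega, by omega⟩
  have hu' : u' ∈ winproj v k (fwo ∅ l) := mem_winproj_fwo_empty.2 ⟨hlt.1, by omega, by omega⟩
  have hsorted' := pairwise_winproj_fwo_empty v k l'
  rw [← h k] at hsorted'
  exact (pairwise_winproj_fwo_empty v k l).rel_of_pairwise hsorted' hu hu' hlt hlt.asymm

theorem winproj_fwo_eq_iff_windowAgree {v : ℕ} :
    (∀ k, winproj v k (fwo ∅ l) = winproj v k (fwo ∅ l')) ↔ WindowAgree v l l' := by
  constructor
  · intro h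
    refine ⟨fun u => ?_, fun u u' h₁ h₂ => ⟨firstWrittenBefore_of_winproj_eq h h₁ h₂,
      firstWrittenBefore_of_winproj_eq (fun k => (h k).symm) h₁ h₂⟩⟩
    have := congrArg (u ∈ ·) (h u.1)
    simpa [mem_winproj_fwo_empty] using this
  · intro h k
    have : Std.Antisymm (FirstWrittenBefore l) := ⟨fun _ _ h h' => absurd h' h.asymm⟩
    have hsorted := pairwise_winproj_fwo_empty v k l
    have hsorted' : (winproj v k (fwo ∅ l')).Pairwise (FirstWrittenBefore l) :=
      (pairwise_winproj_fwo_empty v k l').imp_of_mem fun ha hb hab => by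
        rw [mem_winproj_fwo_empty] at ha hb
        exact (h.2 _ _ (by omega) (by omega)).2 hab
    refine List.Perm.eq_of_pairwise' hsorted hsorted'
      ((List.perm_ext_iff_of_nodup ?_ ?_).2 fun a => ?_)
    · exact hsorted.imp fun hab heq => (heq ▸ hab).irrefl
    · exact hsorted'.imp fun hab heq => (heq ▸ hab).irrefl
    · simp only [mem_winproj_fwo_empty, h.1 a]

end FirstWriteOrder

section MergeRank

open Relation

variable {ι : Type*} {v : ℕ} {ms : ι → List (Move Q D dim)}

/-- The constraint that a merge of the family `ms` must write `w` before `u`: some member does,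
and `u` does not lie below the visibility window of the round of `w`. -/
def MergePrec (v : ℕ) (ms : ι → List (Move Q D dim)) (w u : ℕ × Fin dim) : Prop :=
  w.1 ≤ u.1 + v ∧ ∃ i, FirstWrittenBefore (ms i) w u

lemma mergePrec_shortcut (hagree : ∀ i j, WindowAgree v (ms i) (ms j)) {w h y : ℕ × Fin dim}
    (hwh : MergePrec v ms w h) (hhy : MergePrec v ms h y) (hw : w.1 ≤ h.1) (hy : y.1 ≤ h.1) :
    MergePrec v ms w y := by
  obtain ⟨-, i, hwh⟩ := hwh
  obtain ⟨hhy₁, j, hhy⟩ := hhy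
  exact ⟨hw.trans hhy₁, i, hwh.trans (((hagree j i).2 h y hhy₁ (by omega)).1 hhy)⟩

variable [Fintype ι]

def writtenRegs (ms : ι → List (Move Q D dim)) : Finset (ℕ × Fin dim) :=
  Finset.univ.biUnion fun i => ((ms i).filterMap Move.writtenReg).toFinset

lemma mem_writtenRegs {u : ℕ × Fin dim} : u ∈ writtenRegs ms ↔ ∃ i, IsWritten (ms i) u := by
  simp [writtenRegs, IsWritten]

lemma mergePrec_acyclic (hagree : ∀ i j, WindowAgree v (ms i) (ms j)) (u : ℕ × Fin dim) :
    ¬ TransGen (MergePrec v ms) u u :=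
  Relation.not_transGen_self_of_shortcut Prod.fst (writtenRegs ms)
    (fun _ _ ⟨_, i, h⟩ => ⟨mem_writtenRegs.2 ⟨i, h.isWritten_left⟩, mem_writtenRegs.2 ⟨i, h.1⟩⟩)
    (fun _ ⟨_, _, h⟩ => h.irrefl) (fun _ _ _ => mergePrec_shortcut hagree) u

noncomputable def mergeRank (v : ℕ) (ms : ι → List (Move Q D dim)) (u : ℕ × Fin dim) : ℕ :=
  ((writtenRegs ms).filter (ReflTransGen (MergePrec v ms) · u)).card

lemma mergeRank_lt (hagree : ∀ i j, WindowAgree v (ms i) (ms j)) {u u' : ℕ × Fin dim}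
    (h : MergePrec v ms u u') : mergeRank v ms u < mergeRank v ms u' :=
  card_filter_reflTransGen_lt (mergePrec_acyclic hagree)
    (mem_writtenRegs.2 (h.2.imp fun _ h => h.1)) h

lemma mergeRank_pos {u : ℕ × Fin dim} (hu : u ∈ writtenRegs ms) : 0 < mergeRank v ms u :=
  Finset.card_pos.2 ⟨u, Finset.mem_filter.2 ⟨hu, .refl⟩⟩

end MergeRank

section Events

variable {ι : Type*} [Fintype ι] {v : ℕ} {ms : ι → List (Move Q D dim)}
  {e e' : ι × ℕ × Move Q D dim} {u : ℕ × Fin dim}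

/-- The event `(i, t, m)` is the `t`-th move `m` of `ms i`. -/
noncomputable def events (ms : ι → List (Move Q D dim)) : Finset (ι × ℕ × Move Q D dim) :=
  Finset.univ.biUnion fun i => ((ms i).zipIdx.map fun p => (i, p.2, p.1)).toFinset

lemma mem_events : e ∈ events ms ↔ (ms e.1)[e.2.1]? = some e.2.2 := by
  obtain ⟨i, t, m⟩ := e
  simp [events, List.mem_zipIdx_iff_getElem?]

lemma mem_take_succ_of_mem_events (he : e ∈ events ms) : e.2.2 ∈ (ms e.1).take (e.2.1 + 1) :=
  List.mem_of_getElem? (i := e.2.1) (by rw [List.getElem?_take, if_pos (by omega), mem_events.1 he])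

noncomputable def level (v : ℕ) (ms : ι → List (Move Q D dim)) (e : ι × ℕ × Move Q D dim) : ℕ :=
  ((writtenRegs ms).filter fun w =>
    IsWritten ((ms e.1).take (e.2.1 + 1)) w ∧ w.1 ≤ e.2.2.2).sup (mergeRank v ms)

lemma level_mono {i : ι} {s t : ℕ} {m m' : Move Q D dim} (hst : s ≤ t) (hm : m'.2 ≤ m.2) :
    level v ms (i, s, m') ≤ level v ms (i, t, m) := by
  refine Finset.sup_mono fun w hw => ?_
  rw [Finset.mem_filter] at hw ⊢
  exact ⟨hw.1, hw.2.1.take_mono (Nat.succ_le_succ hst), hw.2.2.trans hm⟩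

lemma mergeRank_le_level (he : e ∈ events ms) (hu : e.2.2.writtenReg = some u) :
    mergeRank v ms u ≤ level v ms e := by
  refine Finset.le_sup (Finset.mem_filter.2 ⟨?_, ⟨e.2.2, mem_take_succ_of_mem_events he, hu⟩, ?_⟩)
  · exact mem_writtenRegs.2
      ⟨e.1, e.2.2, List.mem_of_getElem? (mem_events.1 he), hu⟩
  · exact (Move.round_eq_of_writtenReg hu).ge

lemma level_le_mergeRank (hagree : ∀ i j, WindowAgree v (ms i) (ms j))
    (h : ∀ w, IsWritten ((ms e.1).take (e.2.1 + 1)) w → w.1 ≤ e.2.2.2 → w ≠ u →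
      MergePrec v ms w u) :
    level v ms e ≤ mergeRank v ms u := by
  refine Finset.sup_le fun w hw => ?_
  rw [Finset.mem_filter] at hw
  by_cases hwu : w = u
  · rw [hwu]
  · exact (mergeRank_lt hagree (h w hw.2.1 hw.2.2 hwu)).le

lemma level_lt_mergeRank (hagree : ∀ i j, WindowAgree v (ms i) (ms j)) (hu : u ∈ writtenRegs ms)
    (h : ∀ w, IsWritten ((ms e.1).take (e.2.1 + 1)) w → w.1 ≤ e.2.2.2 → MergePrec v ms w u) :
    level v ms e < mergeRank v ms u := by
  refine (Finset.sup_lt_iff (mergeRank_pos hu)).2 fun w hw => ?_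
  rw [Finset.mem_filter] at hw
  exact mergeRank_lt hagree (h w hw.2.1 hw.2.2)

noncomputable def eventKey (v : ℕ) (ms : ι → List (Move Q D dim)) (e : ι × ℕ × Move Q D dim) :
    ℕ ×ₗ ι ×ₗ ℕ :=
  toLex (level v ms e, toLex (e.1, e.2.1))

lemma eventKey_injOn : Set.InjOn (eventKey v ms) (events ms) := by
  intro e he e' he' h
  simp only [eventKey, toLex_inj, Prod.mk.injEq] at h
  obtain ⟨i, t, m⟩ := e
  obtain ⟨i', t', m'⟩ := e'
  obtain ⟨-, rfl, rfl⟩ := h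
  have : m = m' :=
    Option.some_injective _ ((mem_events.1 he).symm.trans ((mem_events (e := (i, t, m'))).1 he'))
  rw [this]

variable [LinearOrder ι]

lemma eventKey_lt_of_level_lt (h : level v ms e < level v ms e') :
    eventKey v ms e < eventKey v ms e' :=
  Prod.Lex.toLex_lt_toLex.2 (.inl h)

lemma eventKey_lt_of_lt (hi : e.1 = e'.1) (ht : e.2.1 < e'.2.1)
    (h : level v ms e ≤ level v ms e') : eventKey v ms e < eventKey v ms e' := by
  rcases h.lt_or_eq with h | h
  · exact eventKey_lt_of_level_lt h
  · exact Prod.Lex.toLex_lt_toLex.2 (.inr ⟨h, Prod.Lex.toLex_lt_toLex.2 (.inr ⟨hi, ht⟩)⟩)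

lemma level_le_of_eventKey_lt (h : eventKey v ms e < eventKey v ms e') :
    level v ms e ≤ level v ms e' := by
  rcases Prod.Lex.toLex_lt_toLex.1 h with h | ⟨h, -⟩
  exacts [h.le, h.le]

end Events

section Merge

variable {ι : Type*} [Fintype ι] [LinearOrder ι] {v : ℕ} {ms : ι → List (Move Q D dim)}
  {L : List (ι × ℕ × Move Q D dim)} {n : ℕ} {u u' : ℕ × Fin dim}

def IsMergeOrder (v : ℕ) (ms : ι → List (Move Q D dim)) (L : List (ι × ℕ × Move Q D dim)) :
    Prop :=
  (∀ e, e ∈ L ↔ e ∈ events ms) ∧ L.Pairwise (eventKey v ms · < eventKey v ms ·)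

lemma exists_isMergeOrder (v : ℕ) (ms : ι → List (Move Q D dim)) : ∃ L, IsMergeOrder v ms L :=
  (events ms).exists_list_pairwise_lt eventKey_injOn

namespace IsMergeOrder

lemma mem_take_iff (hL : IsMergeOrder v ms L) (hn : n < L.length) {e : ι × ℕ × Move Q D dim} :
    e ∈ L.take n ↔ e ∈ events ms ∧ eventKey v ms e < eventKey v ms L[n] := by
  rw [hL.2.mem_take_iff hn, hL.1]

lemma getElem_mem_events (hL : IsMergeOrder v ms L) (hn : n < L.length) : L[n] ∈ events ms :=
  (hL.1 _).1 (List.getElem_mem hn)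

lemma mem_map_iff (hL : IsMergeOrder v ms L) {m : Move Q D dim} :
    m ∈ L.map (·.2.2) ↔ ∃ i, m ∈ ms i := by
  constructor
  · intro h
    obtain ⟨e, he, rfl⟩ := List.mem_map.1 h
    exact ⟨e.1, List.mem_of_getElem? (mem_events.1 ((hL.1 e).1 he))⟩
  · rintro ⟨i, hm⟩
    obtain ⟨t, ht⟩ := List.mem_iff_getElem?.1 hm
    exact List.mem_map.2 ⟨(i, t, m), (hL.1 _).2 (mem_events.2 ht), rfl⟩

lemma isWritten_map_iff (hL : IsMergeOrder v ms L) :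
    IsWritten (L.map (·.2.2)) u ↔ ∃ i, IsWritten (ms i) u := by
  simp only [IsWritten, hL.mem_map_iff]
  exact ⟨fun ⟨m, ⟨i, hm⟩, hw⟩ => ⟨i, m, hm, hw⟩, fun ⟨i, m, hm, hw⟩ => ⟨m, ⟨i, hm⟩, hw⟩⟩

lemma mem_take_of_lt (hL : IsMergeOrder v ms L) {i : ι} {t s : ℕ} {m : Move Q D dim}
    (hn : n < L.length) (he : L[n] = (i, t, m)) (hs : s < t) (hsl : s < (ms i).length) (hr : (ms i)[s].2 ≤ m.2) :
    (ms i)[s] ∈ (L.map (·.2.2)).take n := by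
  rw [← List.map_take]
  refine List.mem_map_of_mem (f := (·.2.2)) (a := (i, s, (ms i)[s]))
    ((hL.mem_take_iff hn).2 ⟨?_, ?_⟩)
  · simp [mem_events, hsl]
  · rw [he]
    exact eventKey_lt_of_lt rfl hs (level_mono hs.le hr)

lemma not_isWritten_take (hL : IsMergeOrder v ms L)
    (hagree : ∀ i j, WindowAgree v (ms i) (ms j)) {i : ι} {t : ℕ} {m : Move Q D dim} (hn : n < L.length) (he : L[n] = (i, t, m))
    (hu : ¬ IsWritten ((ms i).take (t + 1)) u) (hwin : m.2 ≤ u.1 + v) :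
    ¬ IsWritten ((L.map (·.2.2)).take n) u := by
  rintro ⟨_, hm', hw'⟩
  rw [← List.map_take, List.mem_map] at hm'
  obtain ⟨e', he', rfl⟩ := hm'
  obtain ⟨he'ev, hkey⟩ := (hL.mem_take_iff hn).1 he'
  have hev := hL.getElem_mem_events hn
  rw [he] at hkey hev
  have hui : IsWritten (ms i) u :=
    ((hagree e'.1 i).1 u).1 ⟨_, List.mem_of_getElem? (mem_events.1 he'ev), hw'⟩
  have hlt : level v ms (i, t, m) < mergeRank v ms u :=
    level_lt_mergeRank hagree (mem_writtenRegs.2 ⟨i, hui⟩) fun w hw hwr =>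
      ⟨hwr.trans hwin, i, firstWrittenBefore_of_take hw hu hui⟩
  have := mergeRank_le_level (v := v) he'ev hw'
  have := level_le_of_eventKey_lt hkey
  omega

theorem absRun {P : Protocol Q D dim} {σ₀ : Abs Q dim} {σ : ι → Abs Q dim}
    (hL : IsMergeOrder P.v ms L) (hagree : ∀ i j, WindowAgree P.v (ms i) (ms j))
    (hrun : ∀ i, AbsRun P σ₀ (ms i) (σ i)) :
    AbsRun P σ₀ (L.map (·.2.2)) ((L.map (·.2.2)).foldl Abs.next σ₀) := by
  refine absRun_foldl_iff.2 fun n hn => ?_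
  have hnL : n < L.length := by simpa using hn
  rcases he : L[n] with ⟨i, t, m⟩
  have hev := hL.getElem_mem_events hnL
  rw [he, mem_events] at hev
  dsimp only at hev
  obtain ⟨ht, rfl⟩ := List.getElem?_eq_some_iff.1 hev
  have hstream := absRun_foldl_iff.1 ((hrun i).eq_foldl ▸ hrun i) t ht
  rw [List.getElem_map, he]
  refine hstream.transfer (fun ℓ hℓ hℓr => ?_) (fun w hw hwr => ?_) (fun w hw hwin hnone => ?_)
  · rw [Abs.foldl_next_S] at hℓ ⊢
    refine hℓ.imp_right ?_
    rintro ⟨_, hm', rfl⟩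
    obtain ⟨s, hs, rfl⟩ := List.mem_take_iff_getElem.1 hm'
    exact ⟨_, hL.mem_take_of_lt hnL he (by omega) _ ((Move.round_le_target _).trans hℓr), rfl⟩
  · rw [Abs.foldl_next_W] at hw ⊢
    refine hw.imp_right ?_
    rintro ⟨_, hm', hw'⟩
    obtain ⟨s, hs, rfl⟩ := List.mem_take_iff_getElem.1 hm'
    refine ⟨_, hL.mem_take_of_lt hnL he (by omega) _ ?_, hw'⟩
    rw [Move.round_eq_of_writtenReg hw']
    exact hwr
  · rw [Abs.foldl_next_W] at hw ⊢
    rintro (h | h)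
    · exact hw (.inl h)
    · refine hL.not_isWritten_take hagree hnL he ?_ hwin h
      rw [isWritten_take_succ ht]
      rintro (h' | h')
      · exact hw (.inr h')
      · simp [hnone] at h'

lemma firstWrittenBefore_of_mergeRank_lt (hL : IsMergeOrder v ms L)
    (hagree : ∀ i j, WindowAgree v (ms i) (ms j)) {i : ι} (hu : IsWritten (ms i) u)
    (hu' : IsWritten (L.map (·.2.2)) u') (hrank : mergeRank v ms u < mergeRank v ms u') :
    FirstWrittenBefore (L.map (·.2.2)) u u' := by
  refine firstWrittenBefore_of_forall hu' fun n hn hw' => ?_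
  have hnL : n < L.length := by simpa using hn
  rw [List.getElem_map] at hw'
  have hp := firstWriteIdx_lt_length_iff.2 hu
  set p := firstWriteIdx (ms i) u
  have hpu := writtenReg_getElem_firstWriteIdx hu
  have hev : (i, p, (ms i)[p]) ∈ events ms := by simp [mem_events, hp]
  have hlevel : level v ms (i, p, (ms i)[p]) ≤ mergeRank v ms u := by
    refine level_le_mergeRank hagree fun w hw hwr hwu => ⟨?_, i, ?_⟩
    · rw [← Move.round_eq_of_writtenReg hpu]
      exact hwr.trans (Nat.le_add_right _ _)
    · refine firstWrittenBefore_of_take (n := p) ?_ (fun h => (isWritten_take_iff.1 h).2.false) hu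
      refine ((isWritten_take_succ hp).1 hw).resolve_right fun h => hwu ?_
      exact Option.some_injective _ (h.symm.trans hpu)
  have hmem := (hL.mem_take_iff hnL).2 ⟨hev, eventKey_lt_of_level_lt
    (hlevel.trans_lt (hrank.trans_le (mergeRank_le_level (hL.getElem_mem_events hnL) hw')))⟩
  exact ⟨_, List.map_take ▸ List.mem_map_of_mem hmem, hpu⟩

theorem windowAgree (hL : IsMergeOrder v ms L) (hagree : ∀ i j, WindowAgree v (ms i) (ms j))
    (i : ι) : WindowAgree v (L.map (·.2.2)) (ms i) := by
  have hwritten : ∀ u, IsWritten (L.map (·.2.2)) u ↔ IsWritten (ms i) u := fun u =>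
    hL.isWritten_map_iff.trans ⟨fun ⟨j, h⟩ => ((hagree j i).1 u).1 h, fun h => ⟨i, h⟩⟩
  have hfwd : ∀ u u' : ℕ × Fin dim, u.1 ≤ u'.1 + v → FirstWrittenBefore (ms i) u u' →
      FirstWrittenBefore (L.map (·.2.2)) u u' := fun u u' h₁ h =>
    hL.firstWrittenBefore_of_mergeRank_lt hagree h.isWritten_left ((hwritten u').2 h.1)
      (mergeRank_lt hagree ⟨h₁, i, h⟩)
  refine ⟨hwritten, fun u u' h₁ h₂ => ⟨fun h => ?_, hfwd u u' h₁⟩⟩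
  have hne : u ≠ u' := by
    rintro rfl
    exact h.irrefl
  exact (firstWrittenBefore_or_firstWrittenBefore ((hwritten u).1 h.isWritten_left)
    ((hwritten u').1 h.1) hne).resolve_right fun h' => h.asymm (hfwd u' u h₂ h')

end IsMergeOrder

theorem exists_absRun_merge {P : Protocol Q D dim} {σ₀ : Abs Q dim} {σ : ι → Abs Q dim}
    (hagree : ∀ i j, WindowAgree P.v (ms i) (ms j)) (hrun : ∀ i, AbsRun P σ₀ (ms i) (σ i)) :
    ∃ l : List (Move Q D dim), AbsRun P σ₀ l (l.foldl Abs.next σ₀) ∧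
      (∀ m, m ∈ l ↔ ∃ i, m ∈ ms i) ∧ ∀ i, WindowAgree P.v l (ms i) := by
  obtain ⟨L, hL⟩ := exists_isMergeOrder P.v ms
  exact ⟨_, hL.absRun hagree hrun, fun _ => hL.mem_map_iff, hL.windowAgree hagree⟩

end Merge

/-- Combining executions with equal windowed first-write projections (Lemma 6). -/
theorem combine_equal_windowed_fwo {Q D : Type} {dim : ℕ}
    (P : Protocol Q D dim) (ms1 ms2 : List (Move Q D dim)) (σ1 σ2 : Abs Q dim)
    (h1 : AbsRun P (Abs.init P) ms1 σ1) (h2 : AbsRun P (Abs.init P) ms2 σ2)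
    (hfwo : ∀ k : ℕ, winproj P.v k (fwo ∅ ms1) = winproj P.v k (fwo ∅ ms2)) :
    ∃ ms : List (Move Q D dim), ∃ σ : Abs Q dim,
      AbsRun P (Abs.init P) ms σ ∧
      σ.S = σ1.S ∪ σ2.S ∧
      σ.W = σ1.W ∧ σ.W = σ2.W ∧
      ∀ k : ℕ, winproj P.v k (fwo ∅ ms) = winproj P.v k (fwo ∅ ms1) := by
  have h12 := winproj_fwo_eq_iff_windowAgree.1 hfwo
  obtain ⟨l, hrun, hmem, hagree⟩ := exists_absRun_merge (ms := ![ms1, ms2]) (σ := ![σ1, σ2])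
    (by intro i j; fin_cases i <;> fin_cases j; exacts [.refl _ _, h12, h12.symm, .refl _ _])
    (Fin.forall_fin_two.2 ⟨h1, h2⟩)
  rw [h1.eq_foldl, h2.eq_foldl]
  exact ⟨l, _, hrun,
    Abs.foldl_next_S_of_mem_iff _ fun m => (hmem m).trans Fin.exists_fin_two,
    Abs.foldl_next_W_of_isWritten_iff _ (hagree 0).1,
    Abs.foldl_next_W_of_isWritten_iff _ (hagree 1).1,
    winproj_fwo_eq_iff_windowAgree.2 (hagree 0)⟩
end
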